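/- arXiv:1612.06531 — 9 statements merged into one kernel-verified Lean document; each statement's English description precedes it below -/
import Mathlib

section
/- Let A be a commutative ring and let F →ʰ M →ᵍ N → 0 be an exact sequence of A-modules, where F is a free A-module of rank s. Let r ≥ s be an integer. Then there is a unique A-linear map φ : (⋀^{r−s}_A N) ⊗_A (⋀^s_A F) → ⋀^r_A M such that φ((⋀^{r−s} g)(a) ⊗ b) = a ∧ (⋀^s h)(b) for every a ∈ ⋀^{r−s}_A M and every b ∈ ⋀^s_A F. -/
open ExteriorAlgebra TensorProduct

/-- The map induced by a linear map `f : M →ₗ[R] N` on `n`-th exterior powers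
(`⋀[R]^n M` is the `n`-th exterior power of `M`, realised as a submodule of the exterior
algebra). -/
noncomputable def expMap {R : Type*} [CommRing R] {M N : Type*} [AddCommGroup M] [Module R M]
    [AddCommGroup N] [Module R N] (n : ℕ) (f : M →ₗ[R] N) :
    ⋀[R]^n M →ₗ[R] ⋀[R]^n N :=
  (ExteriorAlgebra.map f).toLinearMap.restrict (p := ⋀[R]^n M) (q := ⋀[R]^n N)
    (by
      intro x hx
      rw [← ExteriorAlgebra.ιMulti_span_fixedDegree] at hx
      induction hx using Submodule.span_induction with
      | mem y hy =>
          obtain ⟨v, rfl⟩ := hy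
          show ExteriorAlgebra.map f (ExteriorAlgebra.ιMulti R n v) ∈ _
          rw [ExteriorAlgebra.map_apply_ιMulti]
          exact ExteriorAlgebra.ιMulti_range R n (Set.mem_range_self _)
      | zero => simp
      | add y z _ _ hy hz => simpa [map_add] using Submodule.add_mem _ hy hz
      | smul a y _ hy => simpa [map_smul] using Submodule.smul_mem _ a hy)

/-!
Since `⋀^s F` is free on `e₁ ∧ ⋯ ∧ eₛ`, every `b` is `c(b) • (e₁ ∧ ⋯ ∧ eₛ)` with `c` the
coordinate induced by `bF.det`, so `(⋀^s h) b = c(b) • (h e₁ ∧ ⋯ ∧ h eₛ)`. It therefore suffices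
to descend `a ↦ a ∧ h e₁ ∧ ⋯ ∧ h eₛ` along the surjection `⋀^(r-s) g` to some
`ψ : ⋀^(r-s) N → ⋀^r M` and to put `φ (x ⊗ b) = c(b) • ψ x`. The descent works because `ker g = im h` lies in the span of the `h eⱼ`:
a wedge one of whose factors lies in that span is killed by `h e₁ ∧ ⋯ ∧ h eₛ`, so by
multilinearity `u₁ ∧ ⋯ ∧ uₚ ∧ h e₁ ∧ ⋯ ∧ h eₛ` depends only on the `g uᵢ`.
Uniqueness holds because `⋀^(r-s) g` is surjective.
-/

open Function Submodule

section Alternating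

variable {A : Type*} [CommRing A] {M N P ι : Type*}
  [AddCommGroup M] [Module A M] [AddCommGroup N] [Module A N] [AddCommGroup P] [Module A P]

noncomputable def AlternatingMap.liftOfSurjective (f : M [⋀^ι]→ₗ[A] P) (g : M →ₗ[A] N)
    (hg : Surjective g) (hf : ∀ u u' : ι → M, g ∘ u = g ∘ u' → f u = f u') :
    N [⋀^ι]→ₗ[A] P where
  toFun w := f (surjInv hg ∘ w)
  map_update_add' w i x y := by
    rw [comp_update, comp_update, comp_update, ← f.map_update_add]
    refine hf _ _ (funext fun j => ?_)
    rcases eq_or_ne j i with rfl | hj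
    · simp [surjInv_eq hg]
    · simp [hj]
  map_update_smul' w i c x := by
    rw [comp_update, comp_update, ← f.map_update_smul]
    refine hf _ _ (funext fun j => ?_)
    rcases eq_or_ne j i with rfl | hj
    · simp [surjInv_eq hg]
    · simp [hj]
  map_eq_zero_of_eq' w i j hw hij := f.map_eq_zero_of_eq _ (by simp [hw]) hij

theorem AlternatingMap.liftOfSurjective_comp (f : M [⋀^ι]→ₗ[A] P) (g : M →ₗ[A] N)
    (hg : Surjective g) (hf : ∀ u u' : ι → M, g ∘ u = g ∘ u' → f u = f u') (u : ι → M) :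
    f.liftOfSurjective g hg hf (g ∘ u) = f u :=
  hf _ _ (funext fun i => surjInv_eq hg (g (u i)))

theorem Module.Basis.alternatingMap_apply_eq_det_smul [Fintype ι] [DecidableEq ι]
    (e : Module.Basis ι A M) (f : M [⋀^ι]→ₗ[A] P) (v : ι → M) : f v = e.det v • f e := by
  suffices f = e.det.smulRight (f e) from congrFun (congrArg DFunLike.coe this) v
  refine e.ext_alternating fun i hi => ?_
  let σ : Equiv.Perm ι := Equiv.ofBijective i (Finite.injective_iff_bijective.1 hi)
  change f (e ∘ σ) = e.det (e ∘ σ) • f e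
  simp [AlternatingMap.map_perm, Module.Basis.det_self, Units.smul_def, Int.cast_smul_eq_zsmul]

end Alternating

namespace ExteriorAlgebra

variable {A : Type*} [CommRing A] {M N : Type*}
  [AddCommGroup M] [Module A M] [AddCommGroup N] [Module A N] {p s : ℕ}

theorem ιMulti_update_mul_ιMulti_eq_zero (v : Fin s → M) (w : Fin p → M) (i : Fin p) {x : M}
    (hx : x ∈ span A (Set.range v)) :
    ιMulti A p (update w i x) * ιMulti A s v = 0 := by
  induction hx using Submodule.span_induction with
  | mem x hx =>
    obtain ⟨j, rfl⟩ := hx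
    rw [ιMulti_mul_ιMulti]
    exact AlternatingMap.map_eq_zero_of_eq _ _ (i := Fin.castAdd s i) (j := Fin.natAdd p j)
      (by simp) (by simp [Fin.ext_iff]; omega)
  | zero => simp
  | add x y _ _ hx hy => rw [AlternatingMap.map_update_add, add_mul, hx, hy, add_zero]
  | smul c x _ hx => rw [AlternatingMap.map_update_smul, smul_mul_assoc, hx, smul_zero]

theorem ιMulti_mul_ιMulti_eq_of_comp_eq {g : M →ₗ[A] N} {v : Fin s → M}
    (hker : LinearMap.ker g ≤ span A (Set.range v)) {u u' : Fin p → M} (huu' : g ∘ u = g ∘ u') :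
    ιMulti A p u' * ιMulti A s v = ιMulti A p u * ιMulti A s v := by
  have hd : ∀ i, (u' - u) i ∈ span A (Set.range v) := fun i => hker <| by
    rw [LinearMap.mem_ker, Pi.sub_apply, map_sub, sub_eq_zero]
    exact (congrFun huu' i).symm
  -- expand `u' = (u' - u) + u`: every term except `ιMulti u` has a factor from `u' - u`
  rw [← sub_add_cancel u' u, ← AlternatingMap.coe_multilinearMap, MultilinearMap.map_add_univ,
    Finset.sum_mul, Finset.sum_eq_single ∅ _ (by simp), Finset.piecewise_empty]
  intro S _ hS
  obtain ⟨i, hi⟩ := Finset.nonempty_iff_ne_empty.2 hS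
  rw [← update_eq_self i (S.piecewise _ u), Finset.piecewise_eq_of_mem _ _ _ hi]
  exact ιMulti_update_mul_ιMulti_eq_zero v _ i (hd i)

end ExteriorAlgebra

namespace exteriorPower

variable {A : Type*} [CommRing A] {F M N P : Type*} [AddCommGroup F] [Module A F]
  [AddCommGroup M] [Module A M] [AddCommGroup N] [Module A N] [AddCommGroup P] [Module A P]

theorem linearMap_apply_eq_smul {s : ℕ} (e : Module.Basis (Fin s) A F) (L : ⋀[A]^s F →ₗ[A] P)
    (b : ⋀[A]^s F) : L b = alternatingMapLinearEquiv e.det b • L (ιMulti A s e) := by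
  suffices L = (alternatingMapLinearEquiv e.det).smulRight (L (ιMulti A s e)) from
    LinearMap.congr_fun this b
  ext v
  simp [e.alternatingMap_apply_eq_det_smul (L.compAlternatingMap (ιMulti A s)) v]

section MulRightDescent

variable (g : M →ₗ[A] N) (hg : Surjective g) {s : ℕ} (v : Fin s → M)
  (hker : LinearMap.ker g ≤ span A (Set.range v))

noncomputable def mulRightDescent (p : ℕ) : ⋀[A]^p N →ₗ[A] ⋀[A]^(p + s) M :=
  alternatingMapLinearEquiv <|
    AlternatingMap.liftOfSurjective
      (((LinearMap.mulRight A (ExteriorAlgebra.ιMulti A s v)).compAlternatingMap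
        (ExteriorAlgebra.ιMulti A p)).codRestrict _ fun u => by
          simpa [ExteriorAlgebra.ιMulti_mul_ιMulti] using
            ExteriorAlgebra.ιMulti_range A (p + s) (Set.mem_range_self _))
      g hg fun _ _ huu' => Subtype.ext <|
        (ExteriorAlgebra.ιMulti_mul_ιMulti_eq_of_comp_eq hker huu').symm

theorem coe_mulRightDescent_map {p : ℕ} (a : ⋀[A]^p M) :
    (mulRightDescent g hg v hker p (map p g a) : ExteriorAlgebra A M) =
      a * ExteriorAlgebra.ιMulti A s v := by
  have : (⋀[A]^(p + s) M).subtype ∘ₗ mulRightDescent g hg v hker p ∘ₗ map p g =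
      LinearMap.mulRight A (ExteriorAlgebra.ιMulti A s v) ∘ₗ (⋀[A]^p M).subtype := by
    ext u
    simp [mulRightDescent, AlternatingMap.liftOfSurjective_comp]
  exact LinearMap.congr_fun this a

end MulRightDescent

end exteriorPower

section ExpMap

variable {A : Type*} [CommRing A] {M N : Type*}
  [AddCommGroup M] [Module A M] [AddCommGroup N] [Module A N]

theorem expMap_eq_map (n : ℕ) (f : M →ₗ[A] N) : expMap n f = exteriorPower.map n f := by
  ext v
  simp only [LinearMap.compAlternatingMap_apply, exteriorPower.map_apply_ιMulti,
    exteriorPower.ιMulti_apply_coe]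
  exact ExteriorAlgebra.map_apply_ιMulti f v

theorem expMap_surjective {f : M →ₗ[A] N} (hf : Surjective f) (n : ℕ) :
    Surjective (expMap n f) := by
  rw [expMap_eq_map]
  exact exteriorPower.map_surjective hf

end ExpMap

/-- Lemma 2.1.  Let `A` be a commutative ring and let
`F →ʰ M →ᵍ N → 0` be an exact sequence of `A`-modules where `F` is free of rank `s`, and let
`r ≥ s`.  Then there is a unique `A`-linear map
`φ : (⋀^{r-s} N) ⊗ (⋀^s F) → ⋀^r M` such that
`φ((⋀^{r-s} g)(a) ⊗ b) = a ∧ (⋀^s h)(b)` for all `a ∈ ⋀^{r-s} M` and `b ∈ ⋀^s F`.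
(The wedge `a ∧ (⋀^s h)(b)` is expressed via the element `m : ⋀^r M` whose image in the
exterior algebra is the product of the images of `a` and `(⋀^s h)(b)`.) -/
theorem stark_systems_stmt0 (A : Type*) [CommRing A] (F M N : Type*)
    [AddCommGroup F] [Module A F] [AddCommGroup M] [Module A M] [AddCommGroup N] [Module A N]
    (s r : ℕ) (hsr : s ≤ r) (bF : Module.Basis (Fin s) A F)
    (h : F →ₗ[A] M) (g : M →ₗ[A] N)
    (hexact : Function.Exact h g) (hsurj : Function.Surjective g) :
    ∃! φ : (⋀[A]^(r - s) N) ⊗[A] (⋀[A]^s F) →ₗ[A] ⋀[A]^r M,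
      ∀ (a : ⋀[A]^(r - s) M) (b : ⋀[A]^s F) (m : ⋀[A]^r M),
        (m : ExteriorAlgebra A M) =
            (a : ExteriorAlgebra A M) * ((expMap s h b : ⋀[A]^s M) : ExteriorAlgebra A M) →
        φ (expMap (r - s) g a ⊗ₜ[A] b) = m := by
  obtain ⟨p, rfl⟩ := Nat.exists_eq_add_of_le' hsr
  rw [Nat.add_sub_cancel]
  have hker : LinearMap.ker g ≤ span A (Set.range (h ∘ bF)) := by
    rw [hexact.linearMap_ker_eq, Set.range_comp, ← Submodule.map_span, bF.span_eq,
      Submodule.map_top]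
  let φ := (TensorProduct.rid A _).toLinearMap ∘ₗ TensorProduct.map
    (exteriorPower.mulRightDescent g hsurj (h ∘ bF) hker p)
    (exteriorPower.alternatingMapLinearEquiv bF.det)
  have hφ (a : ⋀[A]^p M) (b : ⋀[A]^s F) :
      (φ (expMap p g a ⊗ₜ b) : ExteriorAlgebra A M) = a * (expMap s h b : ExteriorAlgebra A M) := by
    rw [expMap_eq_map, expMap_eq_map, exteriorPower.linearMap_apply_eq_smul bF _ b]
    simp [φ, exteriorPower.coe_mulRightDescent_map]
  refine ⟨φ, fun a b m hm => Subtype.ext ((hφ a b).trans hm.symm), fun φ' hφ' => ?_⟩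
  refine TensorProduct.ext' fun x b => ?_
  obtain ⟨a, rfl⟩ := expMap_surjective hsurj p x
  exact hφ' a b _ (hφ a b)
end

section
/- Let A be a commutative ring, M a finitely generated projective A-module, and r ≥ 0 an integer. Then the canonical map l_M : ⋀^r_A M → ⋂^r_A M induced by the pairing (m₁∧…∧m_r, f₁∧…∧f_r) ↦ det(fᵢ(mⱼ)) is an isomorphism. -/
open ExteriorAlgebra Module

namespace StarkAux

variable {A : Type*} [CommRing A] {M : Type*} [AddCommGroup M] [Module A M]

/-- The increasing enumeration of a subset of `Fin n` of cardinality `r`. -/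
noncomputable def emb {n r : ℕ} (S : {s : Finset (Fin n) // s.card = r}) : Fin r → Fin n :=
  fun i => S.1.orderEmbOfFin S.2 i

lemma emb_injective {n r : ℕ} (S : {s : Finset (Fin n) // s.card = r}) :
    Function.Injective (emb S) :=
  (S.1.orderEmbOfFin S.2).injective

lemma image_emb {n r : ℕ} (S : {s : Finset (Fin n) // s.card = r}) (σ : Equiv.Perm (Fin r)) :
    Finset.image (fun j => emb S (σ j)) Finset.univ = S.1 := by
  apply Finset.coe_injective
  rw [Finset.coe_image, Finset.coe_univ, Set.image_univ]
  have : (fun j => emb S (σ j)) = (emb S) ∘ σ := rfl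
  rw [this, σ.surjective.range_comp]
  exact S.1.range_orderEmbOfFin S.2

/-- Expansion of an alternating map along a "dual family". -/
lemma expand {N : Type*} [AddCommGroup N] [Module A N] {n r : ℕ}
    (x : Fin n → M) (fd : Fin n → Module.Dual A M)
    (hd : ∀ m : M, ∑ i, fd i m • x i = m)
    (φ : M [⋀^Fin r]→ₗ[A] N) (m : Fin r → M) :
    φ m = ∑ S : {s : Finset (Fin n) // s.card = r},
      (Matrix.det (Matrix.of fun i j => fd (emb S i) (m j))) • φ (fun i => x (emb S i)) := by
  classical
  have h1 : φ m = ∑ p : Fin r → Fin n, (∏ j, fd (p j) (m j)) • φ (fun j => x (p j)) := by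
    have e1 : φ m = φ (fun j => ∑ i, fd i (m j) • x i) := by
      congr 1; funext j; exact (hd (m j)).symm
    rw [e1]
    rw [show (φ (fun j => ∑ i, fd i (m j) • x i) : N)
        = φ.toMultilinearMap (fun j => ∑ i, fd i (m j) • x i) from rfl]
    rw [MultilinearMap.map_sum]
    refine Finset.sum_congr rfl fun p _ => ?_
    exact φ.toMultilinearMap.map_smul_univ (fun j => fd (p j) (m j)) (fun j => x (p j))
  have hne0 : ∀ p ∈ (Finset.univ : Finset (Fin r → Fin n)),
      (∏ j, fd (p j) (m j)) • φ (fun j => x (p j)) ≠ 0 → Function.Injective p := by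
    intro p _ hne
    by_contra hp
    obtain ⟨i, j, heq, hne2⟩ := Function.not_injective_iff.mp hp
    exact hne (by rw [φ.map_eq_zero_of_eq (fun j => x (p j)) (by exact congrArg x heq) hne2, smul_zero])
  have det_side : ∀ S : {s : Finset (Fin n) // s.card = r},
      (Matrix.det (Matrix.of fun i j => fd (emb S i) (m j))) • φ (fun i => x (emb S i))
        = ∑ σ : Equiv.Perm (Fin r),
            (∏ j, fd (emb S (σ j)) (m j)) • φ (fun j => x (emb S (σ j))) := by
    intro S
    rw [Matrix.det_apply, Finset.sum_smul]
    refine Finset.sum_congr rfl fun σ _ => ?_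
    have e2 : (fun j => x (emb S (σ j))) = (fun j => x (emb S j)) ∘ σ := rfl
    rw [e2, φ.map_perm, Units.smul_def, smul_assoc, Units.smul_def, smul_comm]
    simp only [Matrix.of_apply]
  calc φ m = ∑ p ∈ Finset.univ.filter (fun p : Fin r → Fin n => Function.Injective p),
        (∏ j, fd (p j) (m j)) • φ (fun j => x (p j)) := by
          rw [h1, Finset.sum_filter_of_ne hne0]
    _ = ∑ q : {s : Finset (Fin n) // s.card = r} × Equiv.Perm (Fin r),
        (∏ j, fd (emb q.1 (q.2 j)) (m j)) • φ (fun j => x (emb q.1 (q.2 j))) := by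
          symm
          refine Finset.sum_bij (fun q _ => fun j => emb q.1 (q.2 j)) ?_ ?_ ?_ ?_
          · intro q _
            refine Finset.mem_filter.mpr ⟨Finset.mem_univ _, ?_⟩
            exact (emb_injective q.1).comp q.2.injective
          · rintro ⟨S₁, σ₁⟩ _ ⟨S₂, σ₂⟩ _ h
            have hS : S₁ = S₂ := by
              apply Subtype.ext
              rw [← image_emb S₁ σ₁, ← image_emb S₂ σ₂]
              rw [show (fun j => emb S₁ (σ₁ j)) = (fun j => emb S₂ (σ₂ j)) from h]
            subst hS
            have hσ : σ₁ = σ₂ := by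
              apply Equiv.ext
              intro j
              exact emb_injective S₁ (congrFun h j)
            rw [hσ]
          · intro p hp
            have hpinj : Function.Injective p := (Finset.mem_filter.mp hp).2
            set S : {s : Finset (Fin n) // s.card = r} := ⟨Finset.image p Finset.univ, by
                rw [Finset.card_image_of_injective _ hpinj, Finset.card_univ,
                  Fintype.card_fin]⟩ with hSdef
            have hmem : ∀ j, p j ∈ S.1 := fun j => Finset.mem_image_of_mem p (Finset.mem_univ j)
            set τ : Fin r → Fin r := fun j => (S.1.orderIsoOfFin S.2).symm ⟨p j, hmem j⟩ with hτ
            have hτinj : Function.Injective τ := by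
              intro a b hab
              apply hpinj
              have h2 := congrArg (S.1.orderIsoOfFin S.2) hab
              simp only [hτ, OrderIso.apply_symm_apply] at h2
              exact congrArg Subtype.val h2
            refine ⟨(S, Equiv.ofBijective τ (Finite.injective_iff_bijective.mp hτinj)),
              Finset.mem_univ _, ?_⟩
            funext j
            show emb S (Equiv.ofBijective τ (Finite.injective_iff_bijective.mp hτinj) j) = p j
            rw [Equiv.ofBijective_apply]
            have h3 : (S.1.orderIsoOfFin S.2) (τ j) = ⟨p j, hmem j⟩ := by
              rw [hτ]; exact OrderIso.apply_symm_apply _ _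
            calc emb S (τ j) = ((S.1.orderIsoOfFin S.2) (τ j) : Fin n) :=
                (Finset.coe_orderIsoOfFin_apply _ _ _).symm
              _ = p j := by rw [h3]
          · intro q _
            rfl
    _ = ∑ S : {s : Finset (Fin n) // s.card = r},
        (Matrix.det (Matrix.of fun i j => fd (emb S i) (m j))) • φ (fun i => x (emb S i)) := by
          rw [Fintype.sum_prod_type]
          exact Finset.sum_congr rfl fun S _ => (det_side S).symm

lemma hd_dual {n : ℕ} (x : Fin n → M) (fd : Fin n → Module.Dual A M)
    (hd : ∀ m : M, ∑ i, fd i m • x i = m) (ψ : Module.Dual A M) :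
    ∑ i, ψ (x i) • fd i = ψ := by
  ext m
  simp only [LinearMap.coe_sum, Finset.sum_apply, LinearMap.smul_apply, smul_eq_mul]
  calc ∑ i, ψ (x i) * fd i m = ψ (∑ i, fd i m • x i) := by
        rw [map_sum]
        refine Finset.sum_congr rfl fun i _ => ?_
        rw [map_smul, smul_eq_mul, mul_comm]
    _ = ψ m := by rw [hd]

end StarkAux

open StarkAux

set_option maxHeartbeats 1000000

/-- Let `A` be a commutative ring, `M` a finitely generated projective
`A`-module, and `r ≥ 0`.  Then the canonical map `l_M : ⋀^r M → ⋂^r M`, where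
`⋂^r M := Hom_A(⋀^r M^*, A)` is the `r`-th exterior bidual, induced by the pairing
`(m₁ ∧ ⋯ ∧ m_r, f₁ ∧ ⋯ ∧ f_r) ↦ det (fᵢ mⱼ)`, is an isomorphism.
(The map `l` is pinned down by its values on wedges of vectors and wedges of functionals,
which generate `⋀^r M` and `⋀^r M^*` respectively.) -/
theorem stark_systems_stmt4 (A : Type*) [CommRing A] (M : Type*) [AddCommGroup M] [Module A M]
    [Module.Projective A M] [Module.Finite A M] (r : ℕ)
    (l : ⋀[A]^r M →ₗ[A] Module.Dual A (⋀[A]^r (Module.Dual A M)))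
    (hl : ∀ (m : Fin r → M) (f : Fin r → Module.Dual A M)
        (wm : ⋀[A]^r M) (wf : ⋀[A]^r (Module.Dual A M)),
      (wm : ExteriorAlgebra A M) = ExteriorAlgebra.ιMulti A r m →
      (wf : ExteriorAlgebra A (Module.Dual A M)) =
          ExteriorAlgebra.ιMulti A r f →
      l wm wf = Matrix.det (Matrix.of fun i j => f i (m j))) :
    Function.Bijective l := by
  classical
  obtain ⟨n, π, g, hπ, hg, hcomp⟩ := Module.Finite.exists_comp_eq_id_of_projective A M
  set x : Fin n → M := fun i => π (Pi.single i 1) with hx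
  set fd : Fin n → Module.Dual A M := fun i => (LinearMap.proj i).comp g with hfd
  have hd : ∀ m : M, ∑ i, fd i m • x i = m := by
    intro m
    have e1 : ∀ i, fd i m • x i = π (g m i • (Pi.single i (1 : A) : Fin n → A)) :=
      fun i => (map_smul π _ _).symm
    calc ∑ i, fd i m • x i = π (∑ i, g m i • (Pi.single i (1 : A) : Fin n → A)) := by
          rw [map_sum]; exact Finset.sum_congr rfl fun i _ => e1 i
      _ = π (g m) := by
          congr 1
          have e3 : ∀ i, g m i • (Pi.single i (1 : A) : Fin n → A)
              = (Pi.single i (g m i) : Fin n → A) := by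
            intro i
            rw [← Pi.single_smul, smul_eq_mul, mul_one]
          rw [Finset.sum_congr rfl fun i _ => e3 i, Finset.univ_sum_single]
      _ = m := LinearMap.congr_fun hcomp m
  -- the distinguished wedges
  let Λ := {s : Finset (Fin n) // s.card = r}
  let xS : Λ → ⋀[A]^r M := fun S =>
    ⟨ιMulti A r (fun i => x (emb S i)), ιMulti_range A r (Set.mem_range_self _)⟩
  let fS : Λ → ⋀[A]^r (Module.Dual A M) := fun S =>
    ⟨ιMulti A r (fun i => fd (emb S i)), ιMulti_range A r (Set.mem_range_self _)⟩
  let Φ : Module.Dual A (⋀[A]^r (Module.Dual A M)) → ⋀[A]^r M :=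
    fun φ => ∑ S : Λ, φ (fS S) • xS S
  have Φadd : ∀ φ ψ, Φ (φ + ψ) = Φ φ + Φ ψ := fun φ ψ => by
    simp [Φ, add_smul, Finset.sum_add_distrib]
  have Φsmul : ∀ (a : A) φ, Φ (a • φ) = a • Φ φ := fun a φ => by
    simp [Φ, mul_smul, Finset.smul_sum]
  have Φzero : Φ 0 = 0 := by simp [Φ]
  -- left inverse
  have hleft : ∀ w : ⋀[A]^r M, Φ (l w) = w := by
    have main : ∀ z, z ∈ Submodule.span A (Set.range (ιMulti A r (M := M))) →
        ∀ hz : z ∈ ⋀[A]^r M, Φ (l ⟨z, hz⟩) = ⟨z, hz⟩ := by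
      intro z hzspan
      induction hzspan using Submodule.span_induction with
      | mem z hzr =>
        intro hz
        obtain ⟨v, rfl⟩ := hzr
        have hlv : ∀ S : Λ, l ⟨ιMulti A r v, hz⟩ (fS S)
            = Matrix.det (Matrix.of fun i j => fd (emb S i) (v j)) :=
          fun S => hl v (fun i => fd (emb S i)) ⟨_, hz⟩ (fS S) rfl rfl
        apply Subtype.ext
        show ((∑ S : Λ, (l ⟨ιMulti A r v, hz⟩) (fS S) • xS S : ⋀[A]^r M) : ExteriorAlgebra A M)
          = ιMulti A r v
        rw [AddSubmonoidClass.coe_finset_sum]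
        calc ∑ S : Λ, (((l ⟨ιMulti A r v, hz⟩) (fS S) • xS S : ⋀[A]^r M) : ExteriorAlgebra A M)
            = ∑ S : Λ, (Matrix.det (Matrix.of fun i j => fd (emb S i) (v j)))
                • ιMulti A r (fun i => x (emb S i)) := by
              refine Finset.sum_congr rfl fun S _ => ?_
              rw [SetLike.val_smul, hlv S]
          _ = ιMulti A r v := (expand x fd hd (ιMulti A r) v).symm
      | zero =>
        intro hz
        have : (⟨0, hz⟩ : ⋀[A]^r M) = 0 := rfl
        rw [this, map_zero, Φzero]
      | add z₁ z₂ h₁ h₂ ih₁ ih₂ =>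
        intro hz
        have hz₁ : z₁ ∈ ⋀[A]^r M := by rw [← ιMulti_span_fixedDegree]; exact h₁
        have hz₂ : z₂ ∈ ⋀[A]^r M := by rw [← ιMulti_span_fixedDegree]; exact h₂
        have : (⟨z₁ + z₂, hz⟩ : ⋀[A]^r M) = ⟨z₁, hz₁⟩ + ⟨z₂, hz₂⟩ := rfl
        rw [this, map_add, Φadd, ih₁ hz₁, ih₂ hz₂]
      | smul a z h ih =>
        intro hz
        have hz' : z ∈ ⋀[A]^r M := by rw [← ιMulti_span_fixedDegree]; exact h
        have : (⟨a • z, hz⟩ : ⋀[A]^r M) = a • ⟨z, hz'⟩ := rfl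
        rw [this, map_smul, Φsmul, ih hz']
    intro w
    have hw : (w : ExteriorAlgebra A M) ∈ Submodule.span A (Set.range (ιMulti A r (M := M))) := by
      rw [ιMulti_span_fixedDegree]; exact w.2
    have := main w hw w.2
    simpa using this
  -- right inverse
  have hright : ∀ φ, l (Φ φ) = φ := by
    intro φ
    apply LinearMap.ext
    intro wf
    have main : ∀ z, z ∈ Submodule.span A (Set.range (ιMulti A r (M := Module.Dual A M))) →
        ∀ hz : z ∈ ⋀[A]^r (Module.Dual A M), l (Φ φ) ⟨z, hz⟩ = φ ⟨z, hz⟩ := by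
      intro z hzspan
      induction hzspan using Submodule.span_induction with
      | mem z hzr =>
        intro hz
        obtain ⟨gv, rfl⟩ := hzr
        -- expand the wedge of functionals
        have hdd : ∀ ψ : Module.Dual A M, ∑ i, (Module.Dual.eval A M (x i)) ψ • fd i = ψ := by
          intro ψ
          exact hd_dual x fd hd ψ
        have hexp := expand fd (fun i => Module.Dual.eval A M (x i)) hdd (ιMulti A r) gv
        have hsub : (⟨ιMulti A r gv, hz⟩ : ⋀[A]^r (Module.Dual A M))
            = ∑ S : Λ, (Matrix.det (Matrix.of fun i j => gv j (x (emb S i)))) • fS S := by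
          apply Subtype.ext
          rw [AddSubmonoidClass.coe_finset_sum]
          calc (ιMulti A r gv : ExteriorAlgebra A (Module.Dual A M))
              = ∑ S : Λ, (Matrix.det (Matrix.of fun i j =>
                  (Module.Dual.eval A M (x (emb S i))) (gv j))) • ιMulti A r
                    (fun i => fd (emb S i)) := hexp
            _ = ∑ S : Λ, ((((Matrix.det (Matrix.of fun i j => gv j (x (emb S i)))) • fS S) :
                  ⋀[A]^r (Module.Dual A M)) : ExteriorAlgebra A (Module.Dual A M)) := by
                refine Finset.sum_congr rfl fun S _ => ?_
                rw [SetLike.val_smul]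
                rfl
        have hlx : ∀ S : Λ, l (xS S) ⟨ιMulti A r gv, hz⟩
            = Matrix.det (Matrix.of fun i j => gv i (x (emb S j))) :=
          fun S => hl (fun i => x (emb S i)) gv (xS S) ⟨_, hz⟩ rfl rfl
        calc l (Φ φ) ⟨ιMulti A r gv, hz⟩
            = ∑ S : Λ, φ (fS S) * (l (xS S) ⟨ιMulti A r gv, hz⟩) := by
              show l (∑ S : Λ, φ (fS S) • xS S) ⟨ιMulti A r gv, hz⟩ = _
              rw [map_sum, LinearMap.sum_apply]
              refine Finset.sum_congr rfl fun S _ => ?_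
              rw [map_smul, LinearMap.smul_apply, smul_eq_mul]
          _ = ∑ S : Λ, (Matrix.det (Matrix.of fun i j => gv j (x (emb S i)))) * φ (fS S) := by
              refine Finset.sum_congr rfl fun S _ => ?_
              rw [hlx S, mul_comm]
              congr 1
              rw [← Matrix.det_transpose]
              congr 1
          _ = φ ⟨ιMulti A r gv, hz⟩ := by
              rw [hsub, map_sum]
              refine Finset.sum_congr rfl fun S _ => ?_
              rw [map_smul, smul_eq_mul]
      | zero =>
        intro hz
        have : (⟨0, hz⟩ : ⋀[A]^r (Module.Dual A M)) = 0 := rfl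
        rw [this, map_zero, map_zero]
      | add z₁ z₂ h₁ h₂ ih₁ ih₂ =>
        intro hz
        have hz₁ : z₁ ∈ ⋀[A]^r (Module.Dual A M) := by
          rw [← ιMulti_span_fixedDegree]; exact h₁
        have hz₂ : z₂ ∈ ⋀[A]^r (Module.Dual A M) := by
          rw [← ιMulti_span_fixedDegree]; exact h₂
        have : (⟨z₁ + z₂, hz⟩ : ⋀[A]^r (Module.Dual A M)) = ⟨z₁, hz₁⟩ + ⟨z₂, hz₂⟩ := rfl
        rw [this, map_add, map_add, ih₁ hz₁, ih₂ hz₂]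
      | smul a z h ih =>
        intro hz
        have hz' : z ∈ ⋀[A]^r (Module.Dual A M) := by
          rw [← ιMulti_span_fixedDegree]; exact h
        have : (⟨a • z, hz⟩ : ⋀[A]^r (Module.Dual A M)) = a • ⟨z, hz'⟩ := rfl
        rw [this, map_smul, map_smul, ih hz']
    have hwf : (wf : ExteriorAlgebra A (Module.Dual A M))
        ∈ Submodule.span A (Set.range (ιMulti A r (M := Module.Dual A M))) := by
      rw [ιMulti_span_fixedDegree]; exact wf.2
    have := main wf hwf wf.2
    simpa using this
  exact Function.bijective_iff_has_inverse.mpr ⟨Φ, hleft, hright⟩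
end

section
/- Let R be a commutative Artinian local ring with finite residue field which is injective as a module over itself (i.e., a zero-dimensional Gorenstein local ring with finite residue field). Then there exists an isomorphism of R-modules R ≅ Hom_ℤ(R, ℚ/ℤ), where the R-module structure on Hom_ℤ(R, ℚ/ℤ) is given by (r·f)(x) = f(rx). -/
/-!
Self-injectivity turns annihilators into divisibility: if `ann x ⊆ ann y`, the map `r x ↦ r y`
on `R x` extends to `R`, i.e. is multiplication by some `s`, and `y = s x`. Since `ann r ⊆ 𝔪` for
`r ≠ 0`, every nonzero ideal then contains every `x` with `𝔪 x = 0`; such an `x ≠ 0` exists as `𝔪`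
is nilpotent. For a character `f` with `f x ≠ 0` the map `r ↦ r • f` is thus injective, and it is
bijective because `R` is finite and has at most `|R|` characters (embed `ℚ/ℤ` into `ℂˣ`).
-/

section

variable {R : Type*} [CommRing R]

theorem Submodule.exists_smul_ne_zero_forall_smul_eq_zero {M : Type*} [AddCommGroup M]
    [Module R M] {I : Ideal R} {n : ℕ} {x : M} (hx : x ≠ 0) (hIx : ∀ b ∈ I ^ n, b • x = 0) :
    ∃ c : R, c • x ≠ 0 ∧ ∀ a ∈ I, a • c • x = 0 := by
  induction n generalizing x with
  | zero => exact absurd (by simpa using hIx 1 (by simp)) hx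
  | succ n ih =>
    by_cases hI : ∀ a ∈ I, a • x = 0
    · exact ⟨1, by rwa [one_smul], by simpa using hI⟩
    push Not at hI
    obtain ⟨a, ha, hax⟩ := hI
    obtain ⟨c, hc, hcI⟩ := ih hax fun b hb ↦ by
      rw [smul_smul]; exact hIx _ (pow_succ I n ▸ Ideal.mul_mem_mul hb ha)
    exact ⟨c * a, by rwa [mul_smul], by simpa [mul_smul] using hcI⟩

theorem Ideal.mem_span_singleton_of_torsionOf_le [Module.Injective R R] {x y : R}
    (h : Ideal.torsionOf R R x ≤ Ideal.torsionOf R R y) : y ∈ Ideal.span {x} := by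
  let g : Ideal.span {x} →ₗ[R] R :=
    (Ideal.torsionOf R R x).liftQ (LinearMap.toSpanSingleton R R y) h ∘ₗ
      (Ideal.quotTorsionOfEquivSpanSingleton R R x).symm.toLinearMap
  obtain ⟨g', hg'⟩ := Module.Baer.of_injective ‹_› (Ideal.span {x}) g
  have hgx : g ⟨x, Submodule.mem_span_singleton_self x⟩ = y := by
    have : (Ideal.quotTorsionOfEquivSpanSingleton R R x).symm
        ⟨x, Submodule.mem_span_singleton_self x⟩ = Submodule.Quotient.mk 1 :=
      (LinearEquiv.symm_apply_eq _).mpr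
        (by rw [Ideal.quotTorsionOfEquivSpanSingleton_apply_mk, one_smul])
    simp only [g, LinearMap.comp_apply, LinearEquiv.coe_coe, this]
    exact one_smul R y
  refine Ideal.mem_span_singleton'.mpr ⟨g' 1, ?_⟩
  rw [← hgx, ← hg' x (Submodule.mem_span_singleton_self x), mul_comm, ← smul_eq_mul,
    ← map_smul, smul_eq_mul, mul_one]

end

namespace IsLocalRing

variable {R : Type*} [CommRing R] [IsLocalRing R]

theorem mem_span_singleton_of_maximalIdeal_mul_eq_zero [Module.Injective R R] {x y : R}
    (hx : x ≠ 0) (hmy : ∀ a ∈ maximalIdeal R, a * y = 0) : y ∈ Ideal.span {x} :=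
  Ideal.mem_span_singleton_of_torsionOf_le fun r hr ↦
    hmy r fun hu ↦ hx (hu.mul_right_eq_zero.mp ((Ideal.mem_torsionOf_iff x r).mp hr))

theorem injective_toSpanSingleton_character [Module.Injective R R] {x : R}
    (hmx : ∀ a ∈ maximalIdeal R, a * x = 0) {f : CharacterModule R} (hf : f x ≠ 0) :
    Function.Injective (LinearMap.toSpanSingleton R (CharacterModule R) f) := by
  refine (injective_iff_map_eq_zero _).mpr fun r hr ↦ by_contra fun hr0 ↦ ?_
  obtain ⟨c, rfl⟩ :=
    Ideal.mem_span_singleton'.mp (mem_span_singleton_of_maximalIdeal_mul_eq_zero hr0 hmx)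
  exact hf <| (congrArg f (mul_comm c r)).trans (DFunLike.congr_fun hr c)

variable [IsArtinianRing R]

theorem exists_ne_zero_maximalIdeal_mul_eq_zero :
    ∃ x : R, x ≠ 0 ∧ ∀ a ∈ maximalIdeal R, a * x = 0 := by
  obtain ⟨n, hn⟩ := (isArtinianRing_iff_isNilpotent_maximalIdeal R).mp ‹_›
  obtain ⟨c, hc, hmc⟩ := Submodule.exists_smul_ne_zero_forall_smul_eq_zero (n := n)
    (one_ne_zero' R) fun b hb ↦ by
      rw [hn, Ideal.zero_eq_bot, Ideal.mem_bot] at hb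
      rw [hb, zero_smul]
  exact ⟨c • 1, hc, hmc⟩

theorem finite_of_isArtinianRing [Finite (ResidueField R)] : Finite R := by
  obtain ⟨n, hn⟩ := (isArtinianRing_iff_isNilpotent_maximalIdeal R).mp ‹_›
  have : Finite (R ⧸ (⊥ : Ideal R)) := finite_quotient_iff.mpr ⟨n, hn.le⟩
  exact Finite.of_equiv _ (RingEquiv.quotientBot R).toEquiv

end IsLocalRing

noncomputable def AddCircle.ratCastHom : AddCircle (1 : ℚ) →+ AddCircle (1 : ℝ) :=
  QuotientAddGroup.map _ _ (Rat.castHom ℝ).toAddMonoidHom <|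
    AddSubgroup.zmultiples_le_of_mem (by simp)

theorem AddCircle.ratCastHom_injective : Function.Injective AddCircle.ratCastHom := by
  refine (injective_iff_map_eq_zero _).mpr fun q hq ↦ ?_
  induction q using QuotientAddGroup.induction_on with
  | H q =>
  obtain ⟨n, hn⟩ := (AddCircle.coe_eq_zero_iff (1 : ℝ)).mp hq
  have hnq : ((n • 1 : ℚ) : ℝ) = q := by simpa using hn
  exact (AddCircle.coe_eq_zero_iff (1 : ℚ)).mpr ⟨n, by exact_mod_cast hnq⟩

namespace CharacterModule

variable {A : Type*} [AddCommGroup A]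

noncomputable def toAddChar (c : CharacterModule A) : AddChar A ℂ :=
  (Circle.coeHom.compAddChar
    (AddCircle.toCircle_addChar.compAddMonoidHom AddCircle.ratCastHom)).compAddMonoidHom c

theorem toAddChar_injective : Function.Injective (toAddChar (A := A)) :=
  AddChar.compAddMonoidHom_injective_right _ <| Circle.coe_injective.comp <|
    (AddCircle.injective_toCircle one_ne_zero).comp AddCircle.ratCastHom_injective

instance [Finite A] : Finite (CharacterModule A) := .of_injective _ toAddChar_injective

theorem card_le [Finite A] : Nat.card (CharacterModule A) ≤ Nat.card A := by
  have := Fintype.ofFinite A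
  calc Nat.card (CharacterModule A) ≤ Nat.card (AddChar A ℂ) :=
        Nat.card_le_card_of_injective _ toAddChar_injective
    _ ≤ Nat.card A := by
        simpa only [Nat.card_eq_fintype_card] using AddChar.card_addChar_le A ℂ

end CharacterModule

/-- Let `R` be a commutative Artinian local ring with finite residue field
which is injective as a module over itself (i.e. a zero-dimensional Gorenstein local ring with
finite residue field).  Then there is an isomorphism of `R`-modules
`R ≅ Hom_ℤ(R, ℚ/ℤ)`, where `Hom_ℤ(R, ℚ/ℤ)` is the Pontryagin dual `CharacterModule R`
(with `R`-module structure `(r • f) x = f (r • x)`). -/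
theorem stark_systems_stmt5 (R : Type*) [CommRing R] [IsArtinianRing R] [IsLocalRing R]
    [Finite (IsLocalRing.ResidueField R)] [Module.Injective R R] :
    Nonempty (R ≃ₗ[R] CharacterModule R) := by
  have := IsLocalRing.finite_of_isArtinianRing (R := R)
  obtain ⟨x, hx, hmx⟩ := IsLocalRing.exists_ne_zero_maximalIdeal_mul_eq_zero (R := R)
  obtain ⟨f, hf⟩ := CharacterModule.exists_character_apply_ne_zero_of_ne_zero hx
  have hinj := IsLocalRing.injective_toSpanSingleton_character hmx hf
  exact ⟨.ofBijective _ (hinj.bijective_of_nat_card_le CharacterModule.card_le)⟩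
end

section
/- Let R and S be commutative Artinian local rings, each injective as a module over itself (i.e., zero-dimensional Gorenstein local rings), and let π : R → S be a surjective ring homomorphism with kernel I. Regard S as an R-module via π. Then S is isomorphic as an R-module to the ideal R[I] := { x ∈ R : I·x = 0 }. In particular, there exists an injective R-module homomorphism S → R. -/
/-!
Both maximal ideals are nilpotent, so `R` and `S` have nonzero socle elements `x` and `y`.
Self-injectivity of `R` extends `y ↦ x` from `R ∙ y` to an `R`-linear map `F : S → R`.
Self-injectivity of `S` makes its socle simple, so it is `R ∙ y`, and every nonzero submodule of
`S` meets it; as `F y ≠ 0`, `F` is injective. Its image is an ideal with annihilator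
`ann_R S = I`, and in a self-injective Artinian local ring every ideal is the annihilator of its
annihilator, so `F S = ann I = R[I]`.
-/

open IsLocalRing Submodule

universe v

theorem Module.annihilator_eq_ker_algebraMap (R A : Type*) [CommSemiring R] [Semiring A]
    [Algebra R A] : Module.annihilator R A = RingHom.ker (algebraMap R A) := by
  ext r
  rw [Module.mem_annihilator, RingHom.mem_ker]
  exact ⟨fun h => by simpa [Algebra.smul_def] using h 1,
    fun h a => by rw [Algebra.smul_def, h, zero_mul]⟩

theorem Submodule.torsionBySet_eq_annihilator {R : Type*} [CommRing R] (I : Ideal R) :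
    torsionBySet R R I = I.annihilator := by
  ext x
  simp [mem_torsionBySet_iff, mem_annihilator, mul_comm]

theorem Module.Injective.exists_linearMap_apply_eq {R M : Type*} {Q : Type v} [CommRing R]
    [Small.{v} R] [AddCommGroup M] [Module R M] [AddCommGroup Q] [Module R Q] [Module.Injective R Q]
    {x : M} {q : Q} (h : Ideal.torsionOf R M x ≤ Ideal.torsionOf R Q q) :
    ∃ F : M →ₗ[R] Q, F x = q := by
  let e := Ideal.quotTorsionOfEquivSpanSingleton R M x
  let F₀ : (R ∙ x) →ₗ[R] Q :=
    (liftQ _ (LinearMap.toSpanSingleton R Q q) h) ∘ₗ (e.symm : (R ∙ x) →ₗ[R] _)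
  obtain ⟨F, hF⟩ := Module.Injective.extension_property R Q _ _ (R ∙ x).subtype
    (injective_subtype _) F₀
  have he : e.symm ⟨x, mem_span_singleton_self x⟩ = Submodule.Quotient.mk 1 := by
    rw [LinearEquiv.symm_apply_eq, Ideal.quotTorsionOfEquivSpanSingleton_apply_mk, one_smul]
  refine ⟨F, ?_⟩
  calc F x = F₀ ⟨x, mem_span_singleton_self x⟩ := LinearMap.congr_fun hF ⟨x, _⟩
    _ = q := by
      simp only [F₀, LinearMap.comp_apply, LinearEquiv.coe_coe, he]
      exact one_smul R q

namespace IsLocalRing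

/-- The socle `M[𝔪]` of `M`. -/
def socle (R M : Type*) [CommRing R] [IsLocalRing R] [AddCommGroup M] [Module R M] :
    Submodule R M :=
  torsionBySet R M (maximalIdeal R)

section Socle

variable {R M : Type*} [CommRing R] [IsLocalRing R] [AddCommGroup M] [Module R M]

theorem mem_socle_iff {x : M} : x ∈ socle R M ↔ ∀ a ∈ maximalIdeal R, a • x = 0 := by
  simp [socle, mem_torsionBySet_iff]

theorem mem_maximalIdeal_of_smul_eq_zero {r : R} {x : M} (hx : x ≠ 0) (h : r • x = 0) :
    r ∈ maximalIdeal R := by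
  by_contra hr
  exact hx ((notMem_maximalIdeal.mp hr).smul_eq_zero.mp h)

theorem exists_smul_ne_zero_mem_socle (hm : IsNilpotent (maximalIdeal R)) {x : M} (hx : x ≠ 0) :
    ∃ c : R, c • x ≠ 0 ∧ c • x ∈ socle R M := by
  obtain ⟨n, hn⟩ := hm
  suffices ∀ k : ℕ, ∀ x : M, x ≠ 0 → (∀ a ∈ maximalIdeal R ^ k, a • x = 0) →
      ∃ c : R, c • x ≠ 0 ∧ c • x ∈ socle R M from
    this n x hx fun a ha => by simp [Ideal.mem_bot.mp (hn ▸ ha)]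
  intro k
  induction k with
  | zero => exact fun x hx h => absurd (by simpa using h 1 (by simp)) hx
  | succ k ih =>
    intro x hx h
    by_cases hsoc : x ∈ socle R M
    · exact ⟨1, by simpa using hx, by simpa using hsoc⟩
    obtain ⟨a, ha, hax⟩ : ∃ a ∈ maximalIdeal R, a • x ≠ 0 := by
      simpa [mem_socle_iff] using hsoc
    obtain ⟨c, hc, hcs⟩ := ih (a • x) hax fun b hb => by
      rw [smul_smul]
      exact h _ (pow_succ (maximalIdeal R) k ▸ Ideal.mul_mem_mul hb ha)
    exact ⟨c * a, by rwa [mul_smul], by rwa [mul_smul]⟩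

theorem exists_ne_zero_mem_socle (hm : IsNilpotent (maximalIdeal R)) [Nontrivial M] :
    ∃ y : M, y ≠ 0 ∧ y ∈ socle R M := by
  obtain ⟨x, hx⟩ := exists_ne (0 : M)
  obtain ⟨c, hc, hcs⟩ := exists_smul_ne_zero_mem_socle hm hx
  exact ⟨c • x, hc, hcs⟩

theorem restrictScalars_socle {S : Type*} [CommRing S] [IsLocalRing S] [Algebra R S] [Module S M]
    [IsScalarTower R S M] (hf : Function.Surjective (algebraMap R S)) :
    (socle S M).restrictScalars R = socle R M := by
  ext x
  simp only [restrictScalars_mem, mem_socle_iff, ← map_maximalIdeal_of_surjective _ hf,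
    Ideal.mem_map_iff_of_surjective _ hf]
  constructor
  · intro h a ha
    rw [← algebraMap_smul S]
    exact h _ ⟨a, ha, rfl⟩
  · rintro h _ ⟨a, ha, rfl⟩
    rw [algebraMap_smul]
    exact h a ha

theorem exists_linearMap_apply_eq_of_mem_socle {Q : Type v} [Small.{v} R] [AddCommGroup Q]
    [Module R Q] [Module.Injective R Q] {x : M} {q : Q} (hx : x ≠ 0) (hq : q ∈ socle R Q) :
    ∃ F : M →ₗ[R] Q, F x = q :=
  Module.Injective.exists_linearMap_apply_eq fun r hr =>
    mem_socle_iff.mp hq r (mem_maximalIdeal_of_smul_eq_zero hx hr)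

theorem socle_le_span_singleton [Module.Injective R R] {a : R} (ha : a ≠ 0) :
    socle R R ≤ R ∙ a := by
  intro b hb
  obtain ⟨F, hF⟩ := exists_linearMap_apply_eq_of_mem_socle ha hb
  exact mem_span_singleton.mpr ⟨F 1, by
    rw [← hF, smul_eq_mul, mul_comm, ← smul_eq_mul, ← map_smul, smul_eq_mul, mul_one]⟩

theorem injective_of_socle_le_span_singleton {N : Type*} [AddCommGroup N] [Module R N]
    (hm : IsNilpotent (maximalIdeal R)) {y : M} (hy : y ∈ socle R M) (hsoc : socle R M ≤ R ∙ y)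
    (F : M →ₗ[R] N) (hF : F y ≠ 0) : Function.Injective F := by
  rw [← LinearMap.ker_eq_bot, eq_bot_iff]
  intro z hz
  by_contra hz0
  obtain ⟨c, hc, hcs⟩ := exists_smul_ne_zero_mem_socle hm hz0
  obtain ⟨r, hr⟩ := mem_span_singleton.mp (hsoc hcs)
  have hu : IsUnit r :=
    notMem_maximalIdeal.mp fun hrm => hc (by rw [← hr, mem_socle_iff.mp hy r hrm])
  apply hF
  rw [← hu.smul_eq_zero, ← map_smul, hr, map_smul, LinearMap.mem_ker.mp hz, smul_zero]

/-- If `x ∉ J`, extending `x̄ ↦` (a nonzero socle element) to `G : R ⧸ J → R` yields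
`G 1 ∈ ann J` with `x * G 1 ≠ 0`. -/
theorem annihilator_annihilator (hm : IsNilpotent (maximalIdeal R)) [Module.Injective R R]
    (J : Ideal R) : J.annihilator.annihilator = J := by
  refine le_antisymm (fun x hx => ?_) fun x hx => mem_annihilator.mpr fun y hy => ?_
  · by_contra hxJ
    obtain ⟨y, hy0, hy⟩ := exists_ne_zero_mem_socle (M := R) hm
    obtain ⟨G, hG⟩ := exists_linearMap_apply_eq_of_mem_socle (x := Ideal.Quotient.mk J x)
      (by rwa [ne_eq, Ideal.Quotient.eq_zero_iff_mem]) hy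
    have hGmk : ∀ r, G (Ideal.Quotient.mk J r) = r * G 1 := fun r => by
      rw [← smul_eq_mul, ← map_smul, Algebra.smul_def, mul_one]
      rfl
    have hG1 : G 1 ∈ J.annihilator := mem_annihilator.mpr fun j hj => by
      rw [smul_eq_mul, mul_comm, ← hGmk, Ideal.Quotient.eq_zero_iff_mem.mpr hj, map_zero]
    rw [← hG, hGmk, ← smul_eq_mul, mem_annihilator.mp hx _ hG1] at hy0
    exact hy0 rfl
  · rw [smul_eq_mul, mul_comm]
    exact mem_annihilator.mp hy x hx

end Socle

end IsLocalRing

/-- Let `R` and `S` be commutative Artinian local rings, each injective as a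
module over itself (i.e. zero-dimensional Gorenstein local rings), and let `π : R → S` be a
surjective ring homomorphism with kernel `I`.  Regard `S` as an `R`-module via `π`.  Then `S` is
isomorphic as an `R`-module to the ideal `R[I] = { x ∈ R : I • x = 0 }`; in particular there is
an injective `R`-module homomorphism `S → R`. -/
theorem stark_systems_stmt7 (R S : Type*) [CommRing R] [IsArtinianRing R] [IsLocalRing R]
    [Module.Injective R R] [CommRing S] [IsArtinianRing S] [IsLocalRing S]
    [Module.Injective S S] (π : R →+* S) (hπ : Function.Surjective π) :
    letI : Module R S := Module.compHom S π
    Nonempty (S ≃ₗ[R] Submodule.torsionBySet R R (RingHom.ker π : Set R)) ∧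
      ∃ ι : S →ₗ[R] R, Function.Injective ι := by
  -- its module structure is definitionally `Module.compHom S π`
  let := π.toAlgebra
  have hmR := (isArtinianRing_iff_isNilpotent_maximalIdeal R).mp ‹_›
  have hmS := (isArtinianRing_iff_isNilpotent_maximalIdeal S).mp ‹_›
  obtain ⟨x, hx0, hx⟩ := exists_ne_zero_mem_socle (M := R) hmR
  obtain ⟨y, hy0, hy⟩ := exists_ne_zero_mem_socle (M := S) hmS
  have hsoc : socle R S ≤ R ∙ y := by
    rw [← restrictScalars_socle hπ, ← restrictScalars_span R S hπ]
    exact restrictScalars_mono R (socle_le_span_singleton hy0)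
  obtain ⟨F, hFy⟩ := exists_linearMap_apply_eq_of_mem_socle (R := R) hy0 hx
  have hF : Function.Injective F := injective_of_socle_le_span_singleton hmR
    (restrictScalars_socle (M := S) hπ ▸ hy) hsoc F (hFy ▸ hx0)
  have hann : (LinearMap.range F).annihilator = RingHom.ker π :=
    (LinearEquiv.ofInjective F hF).annihilator_eq.symm.trans
      (Module.annihilator_eq_ker_algebraMap R S)
  have hrange : LinearMap.range F = torsionBySet R R (RingHom.ker π) := by
    rw [torsionBySet_eq_annihilator, ← hann, annihilator_annihilator hmR]
  exact ⟨⟨(LinearEquiv.ofInjective F hF).trans (LinearEquiv.ofEq _ _ hrange)⟩, F, hF⟩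
end

section
/- Let A be a zero-dimensional Gorenstein local ring, M a finitely generated A-module, s ≥ 1 an integer, x ∈ ⋀^s_A M, and let l_M : ⋀^s_A M → ⋂^s_A M = Hom_A(⋀^s_A M^*, A) be the canonical map. (1) If J is an ideal of A and x ∈ J·⋀^s_A M, then the image of the A-linear map l_M(x) : ⋀^s_A M^* → A is contained in J. (2) If there is a free A-submodule M' ⊆ M of rank s such that x lies in the image of the natural map ⋀^s_A M' → ⋀^s_A M, then x ∈ im(l_M(x))·⋀^s_A M, where im(l_M(x)) ⊆ A denotes the image of l_M(x). -/
open ExteriorAlgebra Module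

/-- An alternating map obtained by scaling a fixed vector by a scalar-valued alternating map. -/
noncomputable def altSmulRight {R M N : Type*} [CommRing R] [AddCommGroup M] [Module R M]
    [AddCommGroup N] [Module R N] {ι : Type*} (f : M [⋀^ι]→ₗ[R] R) (c : N) :
    M [⋀^ι]→ₗ[R] N where
  toMultilinearMap := f.toMultilinearMap.smulRight c
  map_eq_zero_of_eq' := fun v i j h hij => by
    have : f v = 0 := f.map_eq_zero_of_eq v h hij
    simp [MultilinearMap.smulRight_apply, this]

lemma altSmulRight_apply {R M N : Type*} [CommRing R] [AddCommGroup M] [Module R M]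
    [AddCommGroup N] [Module R N] {ι : Type*} (f : M [⋀^ι]→ₗ[R] R) (c : N) (v : ι → M) :
    altSmulRight f c v = f v • c := rfl

lemma alt_eq_det_smul {R M N : Type*} [CommRing R] [AddCommGroup M] [Module R M]
    [AddCommGroup N] [Module R N] {s : ℕ} (e : Basis (Fin s) R M)
    (F : M [⋀^Fin s]→ₗ[R] N) (v : Fin s → M) :
    F v = e.det v • F e := by
  have hF : F = altSmulRight e.det (F e) := by
    refine Basis.ext_alternating e fun g hg => ?_
    have hbij : Function.Bijective g := (Finite.injective_iff_bijective).mp hg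
    let σ : Equiv.Perm (Fin s) := Equiv.ofBijective g hbij
    have hgg : (fun i => e (g i)) = (⇑e ∘ ⇑σ) := rfl
    rw [hgg, AlternatingMap.map_perm, altSmulRight_apply, AlternatingMap.map_perm,
      Basis.det_self]
    simp [Units.smul_def, Int.cast_smul_eq_zsmul]
  conv_lhs => rw [hF]
  rw [altSmulRight_apply]

lemma map_subtype_eq_smul {A M : Type*} [CommRing A] [AddCommGroup M] [Module A M]
    {s : ℕ} (M' : Submodule A M) (e : Basis (Fin s) A M') {z : ExteriorAlgebra A M'}
    (hz : z ∈ ⋀[A]^s M') :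
    ∃ a : A, ExteriorAlgebra.map M'.subtype z
      = a • ExteriorAlgebra.ιMulti A s (fun i => (e i : M)) := by
  rw [← ExteriorAlgebra.ιMulti_span_fixedDegree] at hz
  induction hz using Submodule.span_induction with
  | mem y hy =>
      obtain ⟨v, rfl⟩ := hy
      refine ⟨e.det v, ?_⟩
      rw [ExteriorAlgebra.map_apply_ιMulti]
      have h := alt_eq_det_smul e
        ((ExteriorAlgebra.ιMulti A s (M := M)).compLinearMap M'.subtype) v
      simpa [Function.comp_def] using h
  | zero => exact ⟨0, by simp⟩
  | add y z _ _ hy hz =>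
      obtain ⟨a, ha⟩ := hy; obtain ⟨b, hb⟩ := hz
      exact ⟨a + b, by simp [ha, hb, add_smul]⟩
  | smul c y _ hy =>
      obtain ⟨a, ha⟩ := hy
      exact ⟨c * a, by simp [ha, mul_smul]⟩

/-- Lemma 4.14.  Let `A` be a zero-dimensional Gorenstein local ring
(a commutative Artinian local ring injective over itself), `M` a finitely generated `A`-module,
`s ≥ 1`, `x ∈ ⋀^s M`, and `l_M : ⋀^s M → ⋂^s M = Hom_A(⋀^s M^*, A)` the canonical map induced
by the pairing `(m₁ ∧ ⋯ ∧ m_s, f₁ ∧ ⋯ ∧ f_s) ↦ det (fᵢ mⱼ)`.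
(1)  If `J` is an ideal of `A` and `x ∈ J ⋀^s M`, then `im (l_M x) ⊆ J`.
(2)  If there is a free `A`-submodule `M' ⊆ M` of rank `s` with `x` in the image of the natural
map `⋀^s M' → ⋀^s M`, then `x ∈ im (l_M x) ⋀^s M`. -/
theorem stark_systems_stmt9 (A : Type*) [CommRing A] [IsArtinianRing A] [IsLocalRing A]
    [Module.Injective A A] (M : Type*) [AddCommGroup M] [Module A M] [Module.Finite A M]
    (s : ℕ) (hs : 1 ≤ s) (x : ⋀[A]^s M)
    (l : ⋀[A]^s M →ₗ[A] Module.Dual A (⋀[A]^s (Module.Dual A M)))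
    (hl : ∀ (m : Fin s → M) (f : Fin s → Module.Dual A M)
        (wm : ⋀[A]^s M) (wf : ⋀[A]^s (Module.Dual A M)),
      (wm : ExteriorAlgebra A M) = ExteriorAlgebra.ιMulti A s m →
      (wf : ExteriorAlgebra A (Module.Dual A M)) = ExteriorAlgebra.ιMulti A s f →
      l wm wf = Matrix.det (Matrix.of fun i j => f i (m j))) :
    (∀ J : Ideal A, x ∈ J • (⊤ : Submodule A (⋀[A]^s M)) → LinearMap.range (l x) ≤ J) ∧
    (∀ M' : Submodule A M, Nonempty (Basis (Fin s) A M') →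
      x ∈ LinearMap.range (expMap s M'.subtype) →
      x ∈ LinearMap.range (l x) • (⊤ : Submodule A (⋀[A]^s M))) := by
  constructor
  · intro J hxJ
    rintro _ ⟨wf, rfl⟩
    have key : ∀ z ∈ J • (⊤ : Submodule A (⋀[A]^s M)), l z wf ∈ J := by
      intro z hz
      refine Submodule.smul_induction_on hz ?_ ?_
      · intro r hr n _
        rw [map_smul, LinearMap.smul_apply, smul_eq_mul]
        exact J.mul_mem_right _ hr
      · intro z₁ z₂ h1 h2
        rw [map_add, LinearMap.add_apply]
        exact J.add_mem h1 h2
    exact key x hxJ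
  · rintro M' ⟨e⟩ ⟨y, hy⟩
    obtain ⟨a, ha⟩ := map_subtype_eq_smul M' e y.2
    set m : Fin s → M := fun i => (e i : M) with hm
    have hwm : ExteriorAlgebra.ιMulti A s m ∈ ⋀[A]^s M :=
      ExteriorAlgebra.ιMulti_range A s (Set.mem_range_self m)
    set wm : ⋀[A]^s M := ⟨ExteriorAlgebra.ιMulti A s m, hwm⟩ with hwmdef
    have hx' : x = a • wm := by
      apply Subtype.ext
      rw [← hy]
      exact ha
    -- extend the coordinate functionals of `e` to all of `M`
    have hext : ∀ i : Fin s, ∃ h : M →ₗ[A] A, h ∘ₗ M'.subtype = e.coord i := fun i =>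
      Module.Injective.extension_property A A M' M M'.subtype
        (Submodule.injective_subtype M') (e.coord i)
    choose f hf using hext
    have hfm : ∀ i j, f i (m j) = if j = i then 1 else 0 := by
      intro i j
      have : f i (M'.subtype (e j)) = e.coord i (e j) := by
        rw [← LinearMap.comp_apply, hf i]
      simpa [Basis.coord_apply, Basis.repr_self, Finsupp.single_apply] using this
    have hwf : ExteriorAlgebra.ιMulti A s f ∈ ⋀[A]^s (Module.Dual A M) :=
      ExteriorAlgebra.ιMulti_range A s (Set.mem_range_self f)
    set wf : ⋀[A]^s (Module.Dual A M) := ⟨ExteriorAlgebra.ιMulti A s f, hwf⟩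
    have hdet : l wm wf = 1 := by
      rw [hl m f wm wf rfl rfl]
      have hmat : (Matrix.of fun i j => f i (m j)) = (1 : Matrix (Fin s) (Fin s) A) := by
        ext i j
        simp [hfm, Matrix.one_apply, eq_comm]
      rw [hmat, Matrix.det_one]
    have hval : l x wf = a := by
      rw [hx', map_smul, LinearMap.smul_apply, hdet, smul_eq_mul, mul_one]
    have hmem : a ∈ LinearMap.range (l x) := ⟨wf, hval⟩
    rw [hx'] at hmem ⊢
    exact Submodule.smul_mem_smul hmem Submodule.mem_top
end

section
/- Let R be a principal Artinian local ring (a commutative Artinian local ring in which every ideal is principal), let 0 → N → M →ʰ F be an exact sequence of finitely generated R-modules with F free of rank one, let s ≥ 1 be an integer, and let M' ⊆ M be a free R-submodule of rank s. Then there exists a basis y₁, …, y_s of M' such that y₁, …, y_{s−1} ∈ N (equivalently, h(yᵢ) = 0 for 1 ≤ i ≤ s−1); in particular, N' := Σ_{i=1}^{s−1} R·yᵢ is a free R-submodule of M' ∩ N of rank s−1. -/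
/-!
In a local principal ideal ring divisibility is total, so among the values `ψ (b i)` of the
functional `ψ = coord ∘ h` on a basis `b` of `M'` one value `ψ (b j)` divides all the others,
say `ψ (b i) = a i * ψ (b j)`. The transvection `b i ↦ b i - a i • b j` (`i ≠ j`) turns `b`
into a basis all of whose vectors except `b j` lie in `ker ψ = M' ∩ N`; moving `j` to the
last index gives the required basis.
-/

open Module Function

instance IsLocalRing.preValuationRing_of_isPrincipalIdealRing (R : Type*) [CommRing R]
    [IsLocalRing R] [IsPrincipalIdealRing R] : PreValuationRing R := by
  refine PreValuationRing.iff_dvd_total.mpr ⟨fun a b => ?_⟩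
  obtain ⟨c, hc⟩ := Submodule.IsPrincipal.principal (Ideal.span {a, b})
  rw [Ideal.submodule_span_eq] at hc
  have hdvd : ∀ x ∈ ({a, b} : Set R), c ∣ x := fun x hx =>
    Ideal.mem_span_singleton.mp (hc ▸ Ideal.subset_span hx)
  obtain ⟨u, rfl⟩ := hdvd a (by simp)
  obtain ⟨v, rfl⟩ := hdvd b (by simp)
  obtain ⟨x, y, hxy⟩ := Ideal.mem_span_pair.mp (hc ▸ Ideal.mem_span_singleton_self c)
  by_cases hu : IsUnit u
  · exact Or.inl (hu.mul_right_dvd.mpr (dvd_mul_right c v))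
  by_cases hv : IsUnit v
  · exact Or.inr (hv.mul_right_dvd.mpr (dvd_mul_right c u))
  -- otherwise `c = c (x u + y v)` with `x u + y v` in the maximal ideal forces `c = 0`
  have hmem : x * u + y * v ∈ maximalIdeal R :=
    add_mem (Ideal.mul_mem_left _ _ hu) (Ideal.mul_mem_left _ _ hv)
  have hc0 : c = 0 := (isUnit_one_sub_self_of_mem_nonunits _ hmem).mul_left_eq_zero.mp
    (by linear_combination -hxy)
  simp [hc0]

theorem exists_dvd_forall_of_finite {R ι : Type*} [Monoid R] [PreValuationRing R] [Finite ι]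
    [Nonempty ι] (f : ι → R) : ∃ j, ∀ i, f j ∣ f i := by
  have hdir : Directed (swap (· ∣ ·)) f := fun i j =>
    (ValuationRing.dvd_total (f i) (f j)).elim (fun h => ⟨i, dvd_rfl, h⟩) fun h => ⟨j, h, dvd_rfl⟩
  exact hdir.finite_le id

namespace Module.Basis

variable {R V ι : Type*} [CommRing R] [AddCommGroup V] [Module R V]

theorem exists_basis_apply_eq_zero_of_dvd (b : Basis ι R V) (ψ : Dual R V) (j : ι)
    (hj : ∀ i, ψ (b j) ∣ ψ (b i)) : ∃ y : Basis ι R V, ∀ i ≠ j, ψ (y i) = 0 := by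
  classical
  choose a ha using hj
  set φ : Dual R V := b.constr R (update (fun i => -a i) j 0)
  have hφ : φ (b j) = 0 := by simp [φ, constr_basis]
  refine ⟨b.map (LinearEquiv.transvection hφ), fun i hi => ?_⟩
  rw [map_apply, LinearEquiv.transvection.apply, map_add, map_smul, constr_basis,
    update_of_ne hi, ha i, smul_eq_mul]
  ring

theorem exists_basis_apply_eq_zero_of_ne [PreValuationRing R] [Finite ι] (b : Basis ι R V)
    (ψ : Dual R V) (k : ι) : ∃ y : Basis ι R V, ∀ i ≠ k, ψ (y i) = 0 := by
  classical
  have : Nonempty ι := ⟨k⟩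
  obtain ⟨j, hj⟩ := exists_dvd_forall_of_finite (ψ ∘ b)
  obtain ⟨y, hy⟩ := b.exists_basis_apply_eq_zero_of_dvd ψ j hj
  refine ⟨y.reindex (Equiv.swap j k), fun i hi => ?_⟩
  rw [reindex_apply, Equiv.symm_swap]
  refine hy _ ?_
  rwa [Ne, Equiv.swap_apply_eq_iff, Equiv.swap_apply_left]

end Module.Basis

theorem stark_systems_stmt10_general (R : Type*) [CommRing R] [IsLocalRing R]
    [IsPrincipalIdealRing R] (M F : Type*) [AddCommGroup M] [Module R M]
    [AddCommGroup F] [Module R F] (bF : Module.Basis (Fin 1) R F)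
    (N : Submodule R M) (h : M →ₗ[R] F) (hN : N = LinearMap.ker h)
    (s : ℕ) (hs : 1 ≤ s) (M' : Submodule R M) (bM' : Module.Basis (Fin s) R M') :
    ∃ y : Module.Basis (Fin s) R M',
      (∀ i : Fin s, (i : ℕ) < s - 1 → (y i : M) ∈ N) ∧
      (Submodule.span R
          (Set.range fun i : Fin (s - 1) => ((y (Fin.castLE (Nat.sub_le s 1) i) : M))) ≤
        M' ⊓ N) ∧
      Nonempty (Module.Basis (Fin (s - 1)) R
        (Submodule.span R
          (Set.range fun i : Fin (s - 1) => ((y (Fin.castLE (Nat.sub_le s 1) i) : M))))) := by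
  obtain ⟨y, hy⟩ := bM'.exists_basis_apply_eq_zero_of_ne
    (bF.coord 0 ∘ₗ h ∘ₗ M'.subtype) ⟨s - 1, by omega⟩
  have hyN : ∀ i : Fin s, (i : ℕ) < s - 1 → (y i : M) ∈ N := fun i hi => by
    rw [hN, LinearMap.mem_ker, ← bF.forall_coord_eq_zero_iff, Fin.forall_fin_one]
    exact hy i (Fin.ne_of_val_ne hi.ne)
  refine ⟨y, hyN, ?_, ⟨Basis.span ?_⟩⟩
  · rw [Submodule.span_le]
    rintro _ ⟨i, rfl⟩
    exact ⟨(y _).2, hyN _ i.isLt⟩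
  · exact (y.linearIndependent.comp _ (Fin.castLE_injective _)).map' M'.subtype M'.ker_subtype

/-- Let `R` be a principal Artinian local ring, let `0 → N → M →ʰ F` be an
exact sequence of finitely generated `R`-modules with `F` free of rank one (so `N = ker h`),
let `s ≥ 1`, and let `M' ⊆ M` be a free `R`-submodule of rank `s`.  Then `M'` has a basis
`y₀, …, y_{s-1}` whose first `s - 1` members lie in `N` (equivalently, are killed by `h`);
in particular the span `N'` of these first `s - 1` members is a free `R`-submodule of
`M' ∩ N` of rank `s - 1`. -/
theorem stark_systems_stmt10 (R : Type*) [CommRing R] [IsArtinianRing R] [IsLocalRing R]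
    [IsPrincipalIdealRing R] (M F : Type*) [AddCommGroup M] [Module R M] [Module.Finite R M]
    [AddCommGroup F] [Module R F] (bF : Module.Basis (Fin 1) R F)
    (N : Submodule R M) (h : M →ₗ[R] F) (hN : N = LinearMap.ker h)
    (s : ℕ) (hs : 1 ≤ s) (M' : Submodule R M) (bM' : Module.Basis (Fin s) R M') :
    ∃ y : Module.Basis (Fin s) R M',
      (∀ i : Fin s, (i : ℕ) < s - 1 → (y i : M) ∈ N) ∧
      (Submodule.span R
          (Set.range fun i : Fin (s - 1) => ((y (Fin.castLE (Nat.sub_le s 1) i) : M))) ≤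
        M' ⊓ N) ∧
      Nonempty (Module.Basis (Fin (s - 1)) R
        (Submodule.span R
          (Set.range fun i : Fin (s - 1) => ((y (Fin.castLE (Nat.sub_le s 1) i) : M))))) :=
  stark_systems_stmt10_general R M F bF N h hN s hs M' bM'
end

section
/- Let R be a commutative Artinian local ring that is injective as a module over itself (i.e., a zero-dimensional Gorenstein local ring) and let M be a finitely generated R-module. Then the canonical evaluation map M → Hom_R(Hom_R(M, R), R), sending m to (f ↦ f(m)), is an isomorphism of R-modules. -/
set_option linter.unusedSectionVars false

open LinearMap Function

universe u v w x

section Gen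
variable {R : Type u} [CommRing R]
variable {A : Type v} {B : Type w} {C : Type x} [AddCommGroup A] [Module R A]
  [AddCommGroup B] [Module R B] [AddCommGroup C] [Module R C]

theorem my_dualMap_surjective [Module.Injective R R] (f : A →ₗ[R] B) (hf : Injective f) :
    Surjective f.dualMap := by
  intro g
  obtain ⟨h, hh⟩ := Module.Injective.extension_property R R A B f hf g
  exact ⟨h, hh⟩

theorem my_dualMap_injective (f : A →ₗ[R] B) (hf : Surjective f) :
    Injective f.dualMap := by
  intro g₁ g₂ h
  ext b
  obtain ⟨a, rfl⟩ := hf b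
  exact LinearMap.congr_fun h a

theorem my_dual_exact (f : A →ₗ[R] B) (g : B →ₗ[R] C) (hg : Surjective g)
    (he : range f = ker g) : range g.dualMap = ker f.dualMap := by
  apply le_antisymm
  · rintro _ ⟨φ, rfl⟩
    rw [mem_ker]
    ext a
    have : f a ∈ ker g := he ▸ mem_range_self f a
    simp only [dualMap_apply, mem_ker] at this ⊢
    simp [this]
  · intro φ hφ
    have hle : ker g ≤ ker φ := by
      rw [← he]; rintro _ ⟨a, rfl⟩
      exact LinearMap.congr_fun (mem_ker.mp hφ) a
    let e := LinearMap.quotKerEquivOfSurjective g hg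
    refine ⟨(Submodule.liftQ (ker g) φ hle) ∘ₗ (e.symm : C →ₗ[R] B ⧸ ker g), ?_⟩
    ext b
    have hb : e.symm (g b) = Submodule.Quotient.mk b := by
      rw [LinearEquiv.symm_apply_eq]; rfl
    simp only [dualMap_apply, coe_comp, Function.comp_apply, LinearEquiv.coe_coe, hb]
    exact Submodule.liftQ_apply _ _ _

theorem my_four_lemma [Module.Injective R R] (i : A →ₗ[R] B) (p : B →ₗ[R] C)
    (hi : Injective i) (hp : Surjective p) (he : range i = ker p)
    (hA : Bijective (Module.Dual.eval R A)) (hC : Bijective (Module.Dual.eval R C)) :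
    Bijective (Module.Dual.eval R B) := by
  have hcomm1 : ∀ a : A, Module.Dual.eval R B (i a) =
      i.dualMap.dualMap (Module.Dual.eval R A a) := fun a => rfl
  have hcomm2 : ∀ b : B, Module.Dual.eval R C (p b) =
      p.dualMap.dualMap (Module.Dual.eval R B b) := fun b => rfl
  have histar : Surjective i.dualMap := my_dualMap_surjective i hi
  have hpstar : Injective p.dualMap := my_dualMap_injective p hp
  have hestar : range p.dualMap = ker i.dualMap := my_dual_exact i p hp he
  have hi2 : Injective i.dualMap.dualMap := my_dualMap_injective _ histar
  have hp2 : Surjective p.dualMap.dualMap := my_dualMap_surjective _ hpstar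
  have he2 : range i.dualMap.dualMap = ker p.dualMap.dualMap :=
    my_dual_exact p.dualMap i.dualMap histar hestar
  constructor
  · intro b₁ b₂ hb
    suffices h : ∀ b : B, Module.Dual.eval R B b = 0 → b = 0 by
      have := h (b₁ - b₂) (by rw [map_sub, hb, sub_self])
      exact sub_eq_zero.mp this
    intro b hb0
    have hpb : p b = 0 := by
      apply hC.injective
      rw [hcomm2, hb0, map_zero, map_zero]
    obtain ⟨a, rfl⟩ : b ∈ range i := he ▸ mem_ker.mpr hpb
    have : Module.Dual.eval R A a = 0 := by
      apply hi2
      rw [← hcomm1, hb0, map_zero]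
    have := hA.injective (by rw [this, map_zero] : Module.Dual.eval R A a =
      Module.Dual.eval R A 0)
    rw [this, map_zero]
  · intro y
    obtain ⟨c, hc⟩ := hC.surjective (p.dualMap.dualMap y)
    obtain ⟨b, rfl⟩ := hp c
    have : y - Module.Dual.eval R B b ∈ ker p.dualMap.dualMap := by
      rw [mem_ker, map_sub, ← hcomm2, hc, sub_self]
    obtain ⟨z, hz⟩ : y - Module.Dual.eval R B b ∈ range i.dualMap.dualMap := he2 ▸ this
    obtain ⟨a, rfl⟩ := hA.surjective z
    refine ⟨b + i a, ?_⟩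
    rw [map_add, hcomm1, hz]
    abel

end Gen

section ArtinianLocal
variable {R : Type u} [CommRing R] [IsArtinianRing R] [IsLocalRing R]

open scoped Classical in
theorem my_socle_exists : ∃ x : R, x ≠ 0 ∧ ∀ r ∈ IsLocalRing.maximalIdeal R, r * x = 0 := by
  have hnil : IsNilpotent (IsLocalRing.maximalIdeal R) := by
    have := IsArtinianRing.isNilpotent_jacobson_bot (R := R)
    rwa [IsLocalRing.jacobson_eq_maximalIdeal ⊥ bot_ne_top] at this
  obtain ⟨n, hn⟩ := hnil
  have h0 : ∃ n, (IsLocalRing.maximalIdeal R) ^ n = 0 := ⟨n, hn⟩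
  set k := Nat.find h0 with hk
  have hkspec : (IsLocalRing.maximalIdeal R) ^ k = 0 := Nat.find_spec h0
  have hk0 : k ≠ 0 := by
    intro h
    rw [h, pow_zero, Ideal.one_eq_top] at hkspec
    exact top_ne_bot hkspec
  have hlt : (IsLocalRing.maximalIdeal R) ^ (k - 1) ≠ 0 :=
    Nat.find_min h0 (Nat.sub_lt (Nat.pos_of_ne_zero hk0) one_pos)
  obtain ⟨x, hx, hx0⟩ := Submodule.exists_mem_ne_zero_of_ne_bot hlt
  refine ⟨x, hx0, fun r hr => ?_⟩
  have : x * r ∈ (IsLocalRing.maximalIdeal R) ^ (k - 1) * IsLocalRing.maximalIdeal R :=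
    Ideal.mul_mem_mul hx hr
  rw [← pow_succ, Nat.sub_add_cancel (Nat.pos_of_ne_zero hk0), hkspec] at this
  rw [mul_comm]
  exact this

theorem my_exists_injective_dual (S : Type v) [AddCommGroup S] [Module R S]
    [IsSimpleModule R S] : ∃ f : S →ₗ[R] R, Function.Injective f := by
  obtain ⟨x, hx0, hx⟩ := my_socle_exists (R := R)
  set m := IsLocalRing.maximalIdeal R
  have hle : m ≤ ker (toSpanSingleton R R x) := by
    intro r hr
    simp only [mem_ker, toSpanSingleton_apply, smul_eq_mul]
    exact hx r hr
  set φ : (R ⧸ m) →ₗ[R] R := Submodule.liftQ m (toSpanSingleton R R x) hle with hφ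
  have hsimp : IsSimpleModule R (R ⧸ m) :=
    isSimpleModule_iff_isCoatom.mpr (Ideal.isMaximal_def.mp inferInstance)
  have hφinj : Function.Injective φ := by
    rw [← ker_eq_bot]
    rcases hsimp.1.eq_bot_or_eq_top (ker φ) with h | h
    · exact h
    · exfalso
      have h1 : φ (Submodule.Quotient.mk 1) = x := by
        rw [hφ, Submodule.liftQ_apply, toSpanSingleton_apply, one_smul]
      have : φ (Submodule.Quotient.mk 1) = 0 := by rw [← mem_ker, h]; trivial
      exact hx0 (h1 ▸ this)
  have : Nontrivial S := IsSimpleModule.nontrivial R S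
  obtain ⟨s, hs⟩ := exists_ne (0 : S)
  have hsur : Function.Surjective (toSpanSingleton R S s) :=
    IsSimpleModule.toSpanSingleton_surjective R hs
  have hmax : Ideal.IsMaximal (ker (toSpanSingleton R S s)) :=
    IsSimpleModule.ker_toSpanSingleton_isMaximal R hs
  have heq : ker (toSpanSingleton R S s) = m := IsLocalRing.eq_maximalIdeal hmax
  let e : (R ⧸ ker (toSpanSingleton R S s)) ≃ₗ[R] S :=
    LinearMap.quotKerEquivOfSurjective _ hsur
  let e2 : (R ⧸ ker (toSpanSingleton R S s)) ≃ₗ[R] (R ⧸ m) := Submodule.quotEquivOfEq _ _ heq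
  refine ⟨φ ∘ₗ e2.toLinearMap ∘ₗ e.symm.toLinearMap, ?_⟩
  simp only [LinearMap.coe_comp, LinearEquiv.coe_coe]
  exact hφinj.comp (e2.injective.comp e.symm.injective)

theorem my_dual_simple_aux [Module.Injective R R] (S : Type v) [AddCommGroup S] [Module R S]
    [IsSimpleModule R S] (f₀ : S →ₗ[R] R) (hf₀ : Function.Injective f₀) :
    IsSimpleModule R (Module.Dual R S) := by
  rw [isSimpleModule_iff_toSpanSingleton_surjective]
  have : Nontrivial S := IsSimpleModule.nontrivial R S
  obtain ⟨s, hs⟩ := exists_ne (0 : S)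
  constructor
  · refine nontrivial_of_ne f₀ 0 fun h => hs (hf₀ ?_)
    rw [h]; simp
  · intro g hg f
    have hginj : Function.Injective g := by
      rw [← ker_eq_bot]
      rcases eq_bot_or_eq_top (ker g) with h | h
      · exact h
      · exact absurd (ker_eq_top.mp h) hg
    obtain ⟨h, hh⟩ := Module.Injective.extension_property R R S R g hginj f
    refine ⟨h 1, ?_⟩
    ext t
    have : h (g t) = f t := LinearMap.congr_fun hh t
    simp only [toSpanSingleton_apply, LinearMap.smul_apply, smul_eq_mul]
    have h2 : h (g t) = g t * h 1 := by
      have h3 := h.map_smul (g t) 1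
      simpa [smul_eq_mul] using h3
    rw [← this, h2, mul_comm]

-- semisimplicity of modules killed by the maximal ideal
theorem my_semisimple (X : Type v) [AddCommGroup X] [Module R X]
    (hX : ∀ r ∈ IsLocalRing.maximalIdeal R, ∀ x : X, r • x = 0) :
    IsSemisimpleModule R X := by
  apply IsSemisimpleModule.of_sSup_simples_eq_top
  rw [eq_top_iff]
  intro x _
  rcases eq_or_ne x 0 with rfl | hx
  · exact Submodule.zero_mem _
  · have hle : IsLocalRing.maximalIdeal R ≤ ker (toSpanSingleton R X x) := by
      intro r hr
      simp only [mem_ker, toSpanSingleton_apply]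
      exact hX r hr x
    have hne : ker (toSpanSingleton R X x) ≠ ⊤ := by
      intro h
      have h1 : (1 : R) ∈ ker (toSpanSingleton R X x) := h.symm ▸ Submodule.mem_top
      simp only [mem_ker, toSpanSingleton_apply, one_smul] at h1
      exact hx h1
    have hker : ker (toSpanSingleton R X x) = IsLocalRing.maximalIdeal R :=
      ((IsLocalRing.maximalIdeal.isMaximal R).eq_of_le hne hle).symm
    have hmax : Ideal.IsMaximal (ker (toSpanSingleton R X x)) := by
      rw [hker]; infer_instance
    have hsimple : IsSimpleModule R (Submodule.span R {x}) := by
      have e : (R ⧸ ker (toSpanSingleton R X x)) ≃ₗ[R] range (toSpanSingleton R X x) :=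
        LinearMap.quotKerEquivRange _
    -- range = span {x}
      have hr : range (toSpanSingleton R X x) = Submodule.span R {x} :=
        (LinearMap.span_singleton_eq_range R X x).symm
      have h1 : IsSimpleModule R (R ⧸ ker (toSpanSingleton R X x)) :=
        isSimpleModule_iff_isCoatom.mpr (Ideal.isMaximal_def.mp hmax)
      exact IsSimpleModule.congr ((hr ▸ e : (R ⧸ _) ≃ₗ[R] (Submodule.span R {x} : Submodule R X)).symm)
    have hmem : x ∈ Submodule.span R ({x} : Set X) := Submodule.mem_span_singleton_self x
    exact Submodule.mem_sSup_of_mem (by exact hsimple) hmem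

theorem my_noeth_aux : ∀ (n : ℕ) (X : Type v) [AddCommGroup X] [Module R X]
    [Module.Finite R X],
    (IsLocalRing.maximalIdeal R) ^ n • (⊤ : Submodule R X) = ⊥ → IsNoetherian R X := by
  intro n
  induction n with
  | zero =>
    intro X _ _ _ h
    rw [pow_zero, Ideal.one_eq_top, Submodule.top_smul] at h
    have : Subsingleton X := by
      constructor
      intro a b
      have ha : a ∈ (⊥ : Submodule R X) := h ▸ Submodule.mem_top
      have hb : b ∈ (⊥ : Submodule R X) := h ▸ Submodule.mem_top
      rw [Submodule.mem_bot] at ha hb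
      rw [ha, hb]
    infer_instance
  | succ n ih =>
    intro X _ _ _ h
    set m := IsLocalRing.maximalIdeal R
    set N : Submodule R X := m ^ n • ⊤ with hN
    have hmN : m • N = ⊥ := by
      rw [hN, ← mul_smul, ← pow_succ']
      exact h
    have hNkill : ∀ r ∈ m, ∀ y : (N : Submodule R X), r • y = 0 := by
      intro r hr y
      have h2 : r • (y : X) ∈ m • N := Submodule.smul_mem_smul hr y.2
      rw [hmN, Submodule.mem_bot] at h2
      exact Subtype.ext (by simpa using h2)
    have hsemi : IsSemisimpleModule R N := my_semisimple N hNkill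
    have hart : IsArtinian R X := isArtinian_of_fg_of_artinian'
    have hartN : IsArtinian R N := inferInstance
    have hnoethN : IsNoetherian R N := (IsSemisimpleModule.finite_tfae.out 2 1).mp hartN
    have hquot : m ^ n • (⊤ : Submodule R (X ⧸ N)) = ⊥ := by
      have h2 : m ^ n • (⊤ : Submodule R (X ⧸ N)) = Submodule.map N.mkQ (m ^ n • ⊤) := by
        rw [Submodule.map_smul'', Submodule.map_top, Submodule.range_mkQ]
      rw [h2, ← hN, Submodule.mkQ_map_self]
    have hnoethQ : IsNoetherian R (X ⧸ N) := ih (X ⧸ N) hquot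
    exact (isNoetherian_iff_submodule_quotient N).mpr ⟨hnoethN, hnoethQ⟩

theorem my_isNoetherian (M : Type v) [AddCommGroup M] [Module R M] [Module.Finite R M] :
    IsNoetherian R M := by
  have hnil : IsNilpotent (IsLocalRing.maximalIdeal R) := by
    have := IsArtinianRing.isNilpotent_jacobson_bot (R := R)
    rwa [IsLocalRing.jacobson_eq_maximalIdeal ⊥ bot_ne_top] at this
  obtain ⟨n, hn⟩ := hnil
  apply my_noeth_aux n M
  rw [hn, Ideal.zero_eq_bot, Submodule.bot_smul]

theorem my_eval_bij_simple [Module.Injective R R] (S : Type v) [AddCommGroup S] [Module R S]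
    [IsSimpleModule R S] : Bijective (Module.Dual.eval R S) := by
  obtain ⟨f₀, hf₀⟩ := my_exists_injective_dual (R := R) S
  have hS1 : IsSimpleModule R (Module.Dual R S) := my_dual_simple_aux S f₀ hf₀
  obtain ⟨f₁, hf₁⟩ := my_exists_injective_dual (R := R) (Module.Dual R S)
  have hS2 : IsSimpleModule R (Module.Dual R (Module.Dual R S)) :=
    my_dual_simple_aux (Module.Dual R S) f₁ hf₁
  have : Nontrivial S := IsSimpleModule.nontrivial R S
  have hker : ∀ s : S, Module.Dual.eval R S s = 0 → s = 0 := by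
    intro s hs
    by_contra h
    have : f₀ s ≠ 0 := fun h0 => h (hf₀ (by rw [h0, map_zero]))
    exact this (LinearMap.congr_fun hs f₀)
  have hinj : Injective (Module.Dual.eval R S) := by
    intro s₁ s₂ h
    have := hker (s₁ - s₂) (by rw [map_sub, h, sub_self])
    exact sub_eq_zero.mp this
  refine ⟨hinj, ?_⟩
  have hrange : range (Module.Dual.eval R S) ≠ ⊥ := by
    obtain ⟨s, hs⟩ := exists_ne (0 : S)
    intro h
    have : Module.Dual.eval R S s = 0 := by
      have := mem_range_self (Module.Dual.eval R S) s
      rwa [h, Submodule.mem_bot] at this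
    exact hs (hker s this)
  have := (eq_bot_or_eq_top (range (Module.Dual.eval R S))).resolve_left hrange
  exact range_eq_top.mp this

theorem my_eval_bij_of_finiteLength [Module.Injective R R] (M : Type v) [AddCommGroup M]
    [Module R M] (h : IsFiniteLength R M) : Bijective (Module.Dual.eval R M) := by
  induction h with
  | @of_subsingleton X _ _ _ =>
    have hd : Subsingleton (Module.Dual R X) :=
      ⟨fun f g => by ext x; rw [Subsingleton.elim x 0]; simp⟩
    have hdd : Subsingleton (Module.Dual R (Module.Dual R X)) :=
      ⟨fun f g => by ext φ; rw [Subsingleton.elim φ 0]; simp⟩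
    exact ⟨Function.injective_of_subsingleton _, fun y => ⟨0, Subsingleton.elim _ _⟩⟩
  | @of_simple_quotient X _ _ N _ hN ih =>
    exact my_four_lemma N.subtype N.mkQ (Submodule.injective_subtype N)
      (Submodule.mkQ_surjective N)
      (by rw [Submodule.range_subtype, Submodule.ker_mkQ]) ih
      (my_eval_bij_simple (X ⧸ N))

end ArtinianLocal

/-- Matlis reflexivity.  Let `R` be a commutative Artinian local ring that is
injective as a module over itself (a zero-dimensional Gorenstein local ring) and let `M` be a
finitely generated `R`-module.  Then the canonical evaluation map
`M → Hom_R(Hom_R(M, R), R)`, `m ↦ (f ↦ f m)`, is an isomorphism of `R`-modules. -/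
theorem stark_systems_stmt11 (R : Type*) [CommRing R] [IsArtinianRing R] [IsLocalRing R]
    [Module.Injective R R] (M : Type*) [AddCommGroup M] [Module R M] [Module.Finite R M] :
    Function.Bijective (Module.Dual.eval R M) := by
  have h1 : IsNoetherian R M := my_isNoetherian M
  have h2 : IsArtinian R M := isArtinian_of_fg_of_artinian'
  exact my_eval_bij_of_finiteLength M
    (isFiniteLength_iff_isNoetherian_isArtinian.mpr ⟨h1, h2⟩)
end

section
/- Let R be a commutative Artinian local ring that is injective as a module over itself (i.e., a zero-dimensional Gorenstein local ring) and let M be a finitely generated R-module. Then the length of M as an R-module equals the length of Hom_R(M, R) as an R-module. -/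
/-!
Write `N^⊥ ⊆ M^*` and `F^⊥ ⊆ M` for the annihilators of `N ⊆ M` and `F ⊆ M^* = Hom(M, R)`.
Because `R` is self-injective and has a nonzero socle, every nonzero module admits a nonzero map
to `R`; applied to `M/N` this gives `N^⊥⊥ = N`. If `F` is generated by `f₁, …, fₙ`, a functional
vanishing on `F^⊥ = ⋂ ker fᵢ` factors through `(f₁, …, fₙ) : M → Rⁿ`, again by injectivity of `R`,
so it lies in `F`: `F^⊥⊥ = F`. Hence `N ↦ N^⊥` is strictly order-reversing on all submodules of
`M` and `F ↦ F^⊥` on the finitely generated submodules of `M^*`; since every strict chain of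
submodules of `M^*` can be replaced by one of finitely generated submodules of the same length, the
two lattices have the same Krull dimension.
-/

open Module Submodule LinearMap Order

section SelfInjective

variable {R : Type*} [CommRing R] [Module.Injective R R]
  {M N : Type*} [AddCommGroup M] [Module R M] [AddCommGroup N] [Module R N]

theorem Module.Injective.exists_dual_comp_eq_of_ker_le (p : M →ₗ[R] N) {g : Dual R M}
    (h : ker p ≤ ker g) : ∃ f : Dual R N, f ∘ₗ p = g := by
  have hsurj : Function.Surjective (range p).subtype.dualMap := fun φ =>
    Module.Injective.extension_property R R _ _ _ (range p).injective_subtype φ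
  have hg : g ∈ range p.dualMap := by
    rw [range_dualMap_eq_dualAnnihilator_ker_of_subtype_range_surjective p hsurj,
      mem_dualAnnihilator]
    exact fun x hx => h hx
  obtain ⟨f, hf⟩ := hg
  exact ⟨f, hf⟩

theorem Module.Injective.mem_span_of_iInf_ker_le_ker {ι : Type*} [Finite ι] {L : ι → Dual R M}
    {g : Dual R M} (h : ⨅ i, ker (L i) ≤ ker g) : g ∈ span R (Set.range L) := by
  classical
  have := Fintype.ofFinite ι
  obtain ⟨f, rfl⟩ := exists_dual_comp_eq_of_ker_le (LinearMap.pi L) (by rwa [ker_pi])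
  rw [mem_span_range_iff_exists_fun]
  refine ⟨fun i => f fun j => if i = j then 1 else 0, LinearMap.ext fun x => ?_⟩
  rw [LinearMap.comp_apply, pi_apply_eq_sum_univ f]
  simp [mul_comm]

theorem Submodule.dualCoannihilator_dualAnnihilator_eq_of_fg {F : Submodule R (Dual R M)}
    (hF : F.FG) : F.dualCoannihilator.dualAnnihilator = F := by
  obtain ⟨n, L, rfl⟩ := fg_iff_exists_fin_generating_family.1 hF
  refine le_antisymm (fun g hg => Module.Injective.mem_span_of_iInf_ker_le_ker fun x hx => ?_)
    (le_dualCoannihilator_dualAnnihilator _)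
  refine (mem_dualAnnihilator g).1 hg x ((mem_dualCoannihilator _).2 fun φ hφ => ?_)
  refine span_induction ?_ (by simp) (fun _ _ _ _ h₁ h₂ => by simp [h₁, h₂])
    (fun _ _ _ h => by simp [h]) hφ
  rintro _ ⟨i, rfl⟩
  exact mem_iInf _ |>.1 hx i

theorem Submodule.dualCoannihilator_strictAnti_fg :
    StrictAnti fun F : {F : Submodule R (Dual R M) // F.FG} => F.1.dualCoannihilator := by
  refine Antitone.strictAnti_of_injective (fun _ _ h => dualCoannihilator_anti h) fun F G h => ?_
  rw [← Subtype.coe_inj, ← dualCoannihilator_dualAnnihilator_eq_of_fg F.2,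
    ← dualCoannihilator_dualAnnihilator_eq_of_fg G.2]
  exact congrArg dualAnnihilator h

end SelfInjective

theorem IsLocalRing.exists_ne_zero_forall_mem_maximalIdeal_mul_eq_zero {R : Type*} [CommRing R]
    [IsArtinianRing R] [IsLocalRing R] :
    ∃ a : R, a ≠ 0 ∧ ∀ r ∈ maximalIdeal R, r * a = 0 := by
  -- an associated prime `ann a` of `R` is maximal because `R` is Artinian
  obtain ⟨P, hP⟩ := associatedPrimes.nonempty R R
  obtain ⟨hPprime, a, rfl⟩ := isAssociatedPrime_iff.1 hP
  have hPmax : colon ⊥ {a} = maximalIdeal R := IsLocalRing.eq_maximalIdeal inferInstance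
  refine ⟨a, fun ha => hPprime.ne_top ?_, fun r hr => ?_⟩
  · simp [ha, Ideal.eq_top_iff_one, mem_colon_singleton]
  · simpa [← hPmax, mem_colon_singleton] using hr

section ArtinianGorenstein

variable {R : Type*} [CommRing R] [IsArtinianRing R] [IsLocalRing R] [Module.Injective R R]
  {M : Type*} [AddCommGroup M] [Module R M]

theorem Module.exists_dual_ne_zero_of_isArtinianRing {x : M} (hx : x ≠ 0) :
    ∃ f : Dual R M, f x ≠ 0 := by
  obtain ⟨a, ha, hma⟩ := IsLocalRing.exists_ne_zero_forall_mem_maximalIdeal_mul_eq_zero (R := R)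
  have hker : ker (toSpanSingleton R M x) ≤ ker (toSpanSingleton R R a) := fun r hr => by
    have hne : ker (toSpanSingleton R M x) ≠ ⊤ := fun htop => hx <| by
      simpa using (htop ▸ Submodule.mem_top : (1 : R) ∈ ker (toSpanSingleton R M x))
    simpa using hma r (IsLocalRing.le_maximalIdeal hne hr)
  obtain ⟨f, hf⟩ := Module.Injective.exists_dual_comp_eq_of_ker_le _ hker
  refine ⟨f, fun hfx => ha ?_⟩
  simpa [hfx] using congr($hf 1).symm

theorem Submodule.dualAnnihilator_dualCoannihilator_eq (N : Submodule R M) :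
    N.dualAnnihilator.dualCoannihilator = N := by
  refine le_antisymm (fun x hx => ?_) (le_dualAnnihilator_dualCoannihilator N)
  by_contra hxN
  obtain ⟨f, hf⟩ := exists_dual_ne_zero_of_isArtinianRing (R := R)
    (mt (Quotient.mk_eq_zero N).1 hxN)
  refine hf ((mem_dualCoannihilator _).1 hx (f ∘ₗ N.mkQ) ((mem_dualAnnihilator _).2 fun y hy => ?_))
  simp [(Quotient.mk_eq_zero N).2 hy]

theorem Submodule.dualAnnihilator_strictAnti :
    StrictAnti fun N : Submodule R M => N.dualAnnihilator :=
  Antitone.strictAnti_of_injective (fun _ _ h => dualAnnihilator_anti h) fun N N' h => by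
    rw [← dualAnnihilator_dualCoannihilator_eq N, ← dualAnnihilator_dualCoannihilator_eq N', h]

end ArtinianGorenstein

theorem Submodule.krullDim_le_krullDim_fg {R N : Type*} [Semiring R] [AddCommMonoid N]
    [Module R N] : krullDim (Submodule R N) ≤ krullDim {F : Submodule R N // F.FG} := by
  refine iSup_le fun p => ?_
  choose g hg hg' using fun i : Fin p.length =>
    SetLike.exists_of_lt (p.strictMono i.castSucc_lt_succ)
  let G (i : Fin (p.length + 1)) : Submodule R N := span R (g '' {j | j.val < i.val})
  have hG_le (i) : G i ≤ p i := span_le.2 <| by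
    rintro _ ⟨j, hj, rfl⟩
    exact p.monotone (Fin.le_def.2 (by simp only [Fin.val_succ]; exact hj)) (hg j)
  have hG_step (i : Fin p.length) : G i.castSucc < G i.succ := by
    refine SetLike.lt_iff_le_and_exists.2 ⟨span_mono (Set.image_mono fun j hj => ?_),
      g i, subset_span ⟨i, by simp, rfl⟩, fun hi => hg' i (hG_le _ hi)⟩
    simp only [Set.mem_ofPred_eq, Fin.val_castSucc, Fin.val_succ] at hj ⊢
    omega
  let q : LTSeries {F : Submodule R N // F.FG} :=
    ⟨p.length, fun i => ⟨G i, fg_span ((Set.toFinite _).image g)⟩, hG_step⟩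
  exact q.length_le_krullDim

open Order in
theorem stark_systems_stmt12_general (R : Type*) [CommRing R] [IsArtinianRing R] [IsLocalRing R]
    [Module.Injective R R] (M : Type*) [AddCommGroup M] [Module R M] :
    krullDim (Submodule R M) = krullDim (Submodule R (M →ₗ[R] R)) := by
  refine le_antisymm ?_ ?_
  · rw [← krullDim_orderDual (α := Submodule R (M →ₗ[R] R))]
    exact krullDim_le_of_strictMono _ dualAnnihilator_strictAnti.dual_right
  · calc krullDim (Submodule R (M →ₗ[R] R))
        ≤ krullDim {F : Submodule R (M →ₗ[R] R) // F.FG} := krullDim_le_krullDim_fg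
      _ ≤ krullDim (Submodule R M)ᵒᵈ :=
        krullDim_le_of_strictMono _ dualCoannihilator_strictAnti_fg.dual_right
      _ = krullDim (Submodule R M) := krullDim_orderDual

open Order in
/-- Let `R` be a commutative Artinian local ring that is injective as a module
over itself (a zero-dimensional Gorenstein local ring) and let `M` be a finitely generated
`R`-module.  Then the length of `M` as an `R`-module equals the length of `Hom_R(M, R)` as an
`R`-module.  (The length of a module is formalized as the Krull dimension of its lattice of
submodules, i.e. the supremum of the lengths of chains of submodules.) -/
theorem stark_systems_stmt12 (R : Type*) [CommRing R] [IsArtinianRing R] [IsLocalRing R]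
    [Module.Injective R R] (M : Type*) [AddCommGroup M] [Module R M] [Module.Finite R M] :
    krullDim (Submodule R M) = krullDim (Submodule R (M →ₗ[R] R)) :=
  stark_systems_stmt12_general R M
end

section
/- Let R be a commutative Artinian local ring with maximal ideal 𝔪 and residue field k = R/𝔪, and suppose R is injective as a module over itself (i.e., R is a zero-dimensional Gorenstein local ring). Then: (1) the socle R[𝔪] := { x ∈ R : 𝔪·x = 0 } is a principal ideal of R; (2) for any two nonzero R-linear maps f, g : k → R there exists a unit u ∈ R^× with f = u·g (equivalently, the set (Hom_R(k, R) ∖ {0})/R^× has exactly one element). -/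
/-! Since `k` is a simple module, a nonzero map `g : k → R` is injective, so by injectivity of `R`
every `f : k → R` extends along `g` to multiplication by some `c`, i.e. `f = c • g`; when `f ≠ 0`
the scalar `c` is a unit because elements of `𝔪` kill `k`. An element `s` of the socle is the image
of `1` under the map `[r] ↦ r s`, so comparing these maps shows the socle is generated by any of its
nonzero elements. -/

open IsLocalRing

universe u

lemma LinearMap.exists_eq_smul_of_injective {R N : Type u} [CommRing R] [Module.Injective R R]
    [AddCommGroup N] [Module R N] {g : N →ₗ[R] R} (hg : Function.Injective g) (f : N →ₗ[R] R) :
    ∃ c : R, f = c • g := by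
  obtain ⟨h, hh⟩ := Module.Injective.out g hg f
  refine ⟨h 1, LinearMap.ext fun x => ?_⟩
  rw [LinearMap.smul_apply, ← hh x, smul_eq_mul, mul_comm, ← smul_eq_mul, ← map_smul, smul_eq_mul,
    mul_one]

namespace IsLocalRing

variable {R : Type u} [CommRing R] [IsLocalRing R]

instance : IsSimpleModule R (ResidueField R) :=
  isSimpleModule_iff_isCoatom.mpr (maximalIdeal.isMaximal R).out

lemma smul_residueField_linearMap_eq_zero {M : Type*} [AddCommGroup M] [Module R M]
    (f : ResidueField R →ₗ[R] M) {c : R} (hc : c ∈ maximalIdeal R) : c • f = 0 := by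
  ext x
  rw [LinearMap.smul_apply, ← map_smul, Algebra.smul_def, ResidueField.algebraMap_eq,
    (residue_eq_zero_iff c).mpr hc, zero_mul, map_zero, LinearMap.zero_apply]

lemma exists_unit_smul_eq_of_ne_zero [Module.Injective R R] {f g : ResidueField R →ₗ[R] R}
    (hf : f ≠ 0) (hg : g ≠ 0) : ∃ u : Rˣ, f = (u : R) • g := by
  obtain ⟨c, rfl⟩ := LinearMap.exists_eq_smul_of_injective (LinearMap.injective_of_ne_zero hg) f
  have hc : IsUnit c := by
    by_contra hc
    exact hf (smul_residueField_linearMap_eq_zero g ((mem_maximalIdeal c).mpr hc))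
  exact ⟨hc.unit, rfl⟩

def residueFieldLinearMapOfMemSocle {M : Type*} [AddCommGroup M] [Module R M] {x : M}
    (hx : x ∈ Submodule.torsionBySet R M (maximalIdeal R : Set R)) : ResidueField R →ₗ[R] M :=
  (maximalIdeal R).liftQ (LinearMap.toSpanSingleton R M x) fun a ha =>
    (Submodule.mem_torsionBySet_iff _ _).mp hx ⟨a, ha⟩

@[simp]
lemma residueFieldLinearMapOfMemSocle_residue {M : Type*} [AddCommGroup M] [Module R M] {x : M}
    (hx : x ∈ Submodule.torsionBySet R M (maximalIdeal R : Set R)) (r : R) :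
    residueFieldLinearMapOfMemSocle hx (residue R r) = r • x :=
  rfl

lemma mem_span_singleton_of_mem_socle [Module.Injective R R] {s t : R}
    (hs : s ∈ Submodule.torsionBySet R R (maximalIdeal R : Set R)) (hs0 : s ≠ 0)
    (ht : t ∈ Submodule.torsionBySet R R (maximalIdeal R : Set R)) : t ∈ R ∙ s := by
  have hinj : Function.Injective (residueFieldLinearMapOfMemSocle hs) := by
    refine LinearMap.injective_of_ne_zero fun h => hs0 ?_
    simpa [h] using (residueFieldLinearMapOfMemSocle_residue hs 1).symm
  obtain ⟨c, hc⟩ := LinearMap.exists_eq_smul_of_injective hinj (residueFieldLinearMapOfMemSocle ht)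
  have := congr($hc (residue R 1))
  simp only [residueFieldLinearMapOfMemSocle_residue, LinearMap.smul_apply, one_smul] at this
  exact Submodule.mem_span_singleton.mpr ⟨c, this.symm⟩

lemma socle_isPrincipal [Module.Injective R R] :
    (Submodule.torsionBySet R R (maximalIdeal R : Set R)).IsPrincipal := by
  by_cases h : Submodule.torsionBySet R R (maximalIdeal R : Set R) = ⊥
  · exact h ▸ bot_isPrincipal
  obtain ⟨s, hs, hs0⟩ := Submodule.exists_mem_ne_zero_of_ne_bot h
  exact ⟨s, le_antisymm (fun t ht => mem_span_singleton_of_mem_socle hs hs0 ht)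
    ((Submodule.span_singleton_le_iff_mem _ _).mpr hs)⟩

end IsLocalRing

theorem stark_systems_stmt13_general (R : Type*) [CommRing R] [IsLocalRing R]
    [Module.Injective R R] :
    (Submodule.torsionBySet R R (IsLocalRing.maximalIdeal R : Set R)).IsPrincipal ∧
      ∀ f g : IsLocalRing.ResidueField R →ₗ[R] R, f ≠ 0 → g ≠ 0 →
        ∃ u : Rˣ, f = (u : R) • g :=
  ⟨socle_isPrincipal, fun _ _ hf hg => exists_unit_smul_eq_of_ne_zero hf hg⟩

/-- Let `R` be a commutative Artinian local ring with maximal ideal `𝔪` and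
residue field `k = R/𝔪`, injective as a module over itself (a zero-dimensional Gorenstein local
ring).  Then: (1) the socle `R[𝔪] = { x : R | 𝔪 • x = 0 }` is a principal ideal of `R`; and
(2) any two nonzero `R`-linear maps `f g : k → R` differ by a unit of `R`. -/
theorem stark_systems_stmt13 (R : Type*) [CommRing R] [IsArtinianRing R] [IsLocalRing R]
    [Module.Injective R R] :
    (Submodule.torsionBySet R R (IsLocalRing.maximalIdeal R : Set R)).IsPrincipal ∧
      ∀ f g : IsLocalRing.ResidueField R →ₗ[R] R, f ≠ 0 → g ≠ 0 →
        ∃ u : Rˣ, f = (u : R) • g :=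
  stark_systems_stmt13_general R
end
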